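/- arXiv:1105.4681 — 6 statements merged into one kernel-verified Lean document; each statement's English description precedes it below -/
import Mathlib

section
/- Mirror descent regret bound (Lemma 2 of the paper). Assume the mirror-descent setup with strong convexity D(x,y) ≥ (1/2)‖x−y‖² for all x,y ∈ X and radius bound D(x,y) ≤ (1/2)R² for all x,y ∈ X. Let x : ℕ → X, g : ℕ → E*, and positive nonincreasing stepsizes η : ℕ → ℝ satisfy, for every t, the first-order optimality condition (η(t)·g(t) + ψ'(x(t+1)) − ψ'(x(t)))(y − x(t+1)) ≥ 0 for all y ∈ X. Suppose that for each t a function Φ_t : E → ℝ satisfies the subgradient inequality Φ_t(y) ≥ Φ_t(x(t)) + g(t)(y − x(t)) for all y ∈ X. Then for every x* ∈ X and all natural numbers τ < T: ∑_{t=τ+1}^{T} (Φ_t(x(t)) − Φ_t(x*)) ≤ R²/(2η(T)) + ∑_{t=τ+1}^{T} (η(t)/2)·‖g(t)‖_*². -/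
/-!
Write `D` for the Bregman divergence. The optimality condition tested at `x*`, combined with the
three-point identity, gives `η_t g_t(x_{t+1} - x*) ≤ D(x*, x_t) - D(x*, x_{t+1}) - D(x_{t+1}, x_t)`,
while Young's inequality and strong convexity give
`g_t(x_t - x_{t+1}) ≤ η_t ‖g_t‖²/2 + D(x_{t+1}, x_t)/η_t`. Hence, by the subgradient inequality,
`Φ_t(x_t) - Φ_t(x*) ≤ η_t ‖g_t‖²/2 + (D(x*, x_t) - D(x*, x_{t+1}))/η_t`. Summing, the divergence
terms telescope against the nondecreasing weights `1/η_t`, and since `0 ≤ D ≤ R²/2` on `X` they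
add up to at most `R²/(2 η_T)`.
-/

open Finset

section MirrorDescent

variable {E : Type*} [NormedAddCommGroup E] [NormedSpace ℝ E]

def bregmanDiv (ψ : E → ℝ) (ψ' : E → StrongDual ℝ E) (x y : E) : ℝ :=
  ψ x - ψ y - ψ' y (x - y)

theorem bregmanDiv_three_point (ψ : E → ℝ) (ψ' : E → StrongDual ℝ E) (x y z : E) :
    (ψ' y - ψ' x) (z - y) = bregmanDiv ψ ψ' z x - bregmanDiv ψ ψ' z y - bregmanDiv ψ ψ' y x := by
  simp only [bregmanDiv, sub_apply, map_sub]
  ring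

theorem StrongDual.apply_le_young (φ : StrongDual ℝ E) (u : E) {η : ℝ} (hη : 0 < η) :
    φ u ≤ η / 2 * ‖φ‖ ^ 2 + ‖u‖ ^ 2 / (2 * η) := by
  have hsq : ‖φ‖ * ‖u‖ = η / 2 * ‖φ‖ ^ 2 + ‖u‖ ^ 2 / (2 * η) - (η * ‖φ‖ - ‖u‖) ^ 2 / (2 * η) := by
    field_simp
    ring
  calc φ u ≤ ‖φ u‖ := Real.le_norm_self _
    _ ≤ ‖φ‖ * ‖u‖ := φ.le_opNorm u
    _ ≤ η / 2 * ‖φ‖ ^ 2 + ‖u‖ ^ 2 / (2 * η) := by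
      rw [hsq]
      have : 0 ≤ (η * ‖φ‖ - ‖u‖) ^ 2 / (2 * η) := by positivity
      linarith

theorem mirror_descent_step {ψ : E → ℝ} {ψ' : E → StrongDual ℝ E} {x x' z : E}
    {g : StrongDual ℝ E} {η : ℝ} (hη : 0 < η)
    (hstrong : 1 / 2 * ‖x' - x‖ ^ 2 ≤ bregmanDiv ψ ψ' x' x)
    (hopt : 0 ≤ (η • g + ψ' x' - ψ' x) (z - x')) :
    g (x - z) ≤ η / 2 * ‖g‖ ^ 2 + (bregmanDiv ψ ψ' z x - bregmanDiv ψ ψ' z x') / η := by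
  set B := bregmanDiv ψ ψ'
  have hopt' : η * g (x' - z) ≤ B z x - B z x' - B x' x := by
    rw [← bregmanDiv_three_point, ← neg_sub z x', map_neg, mul_neg]
    simp only [add_sub_assoc, add_apply, smul_apply, smul_eq_mul] at hopt
    linarith
  have hyoung : g (x - x') ≤ η / 2 * ‖g‖ ^ 2 + B x' x / η := by
    refine (g.apply_le_young (x - x') hη).trans (add_le_add_right ?_ _)
    rw [div_le_div_iff₀ (by positivity) hη, norm_sub_rev]
    nlinarith
  have hsplit : g (x - z) = g (x - x') + g (x' - z) := by
    rw [← map_add, sub_add_sub_cancel]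
  have hcombine : B x' x / η + (B z x - B z x' - B x' x) / η = (B z x - B z x') / η := by ring
  rw [hsplit, ← hcombine, ← add_assoc]
  exact add_le_add hyoung ((le_div_iff₀' hη).2 hopt')

end MirrorDescent

theorem sum_Icc_sub_div_le_of_antitone {η d : ℕ → ℝ} {M : ℝ} (hηpos : ∀ t, 0 < η t)
    (hη : Antitone η) (hdM : ∀ t, d t ≤ M) (a b : ℕ) :
    ∑ t ∈ Icc a b, (d t - d (t + 1)) / η t ≤ (M - d (b + 1)) / η b := by
  rcases lt_or_ge b a with hba | hab
  · rw [Icc_eq_empty_of_lt hba, sum_empty]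
    exact div_nonneg (sub_nonneg.2 (hdM _)) (hηpos b).le
  induction b, hab using Nat.le_induction with
  | base =>
    rw [Icc_self, sum_singleton]
    gcongr
    · exact (hηpos a).le
    · exact hdM a
  | succ n hn ih =>
    rw [sum_Icc_succ_top (by omega)]
    have hweight : (M - d (n + 1)) / η n ≤ (M - d (n + 1)) / η (n + 1) :=
      div_le_div_of_nonneg_left (sub_nonneg.2 (hdM _)) (hηpos _) (hη n.le_succ)
    have hcombine : (M - d (n + 1)) / η (n + 1) + (d (n + 1) - d (n + 1 + 1)) / η (n + 1)
        = (M - d (n + 1 + 1)) / η (n + 1) := by ring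
    linarith

theorem mirror_descent_regret_bound_general
    {E : Type*} [NormedAddCommGroup E] [NormedSpace ℝ E]
    (X : Set E)
    (ψ : E → ℝ) (ψ' : E → StrongDual ℝ E)
    (D : E → E → ℝ)
    (hD : ∀ x y : E, D x y = ψ x - ψ y - ψ' y (x - y))
    (R : ℝ)
    (hstrong : ∀ x ∈ X, ∀ y ∈ X, (1 / 2 : ℝ) * ‖x - y‖ ^ 2 ≤ D x y)
    (hradius : ∀ x ∈ X, ∀ y ∈ X, D x y ≤ (1 / 2 : ℝ) * R ^ 2)
    (x : ℕ → E) (hx : ∀ t, x t ∈ X)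
    (g : ℕ → StrongDual ℝ E)
    (η : ℕ → ℝ) (hηpos : ∀ t, 0 < η t)
    (hηmono : ∀ s t : ℕ, s ≤ t → η t ≤ η s)
    (hopt : ∀ t : ℕ, ∀ y ∈ X,
      0 ≤ (η t • g t + ψ' (x (t + 1)) - ψ' (x t)) (y - x (t + 1)))
    (Φ : ℕ → E → ℝ)
    (hsub : ∀ t : ℕ, ∀ y ∈ X, Φ t (x t) + g t (y - x t) ≤ Φ t y)
    (xstar : E) (hxstar : xstar ∈ X)
    (τ T : ℕ) :
    ∑ t ∈ Finset.Icc (τ + 1) T, (Φ t (x t) - Φ t xstar)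
      ≤ R ^ 2 / (2 * η T) + ∑ t ∈ Finset.Icc (τ + 1) T, (η t / 2) * ‖g t‖ ^ 2 := by
  obtain rfl : D = bregmanDiv ψ ψ' := funext fun x => funext (hD x)
  set d : ℕ → ℝ := fun t => bregmanDiv ψ ψ' xstar (x t)
  have hstep (t : ℕ) : Φ t (x t) - Φ t xstar ≤ η t / 2 * ‖g t‖ ^ 2 + (d t - d (t + 1)) / η t := by
    have hlin : Φ t (x t) - Φ t xstar ≤ g t (x t - xstar) := by
      have := hsub t xstar hxstar
      rw [← neg_sub, map_neg] at this
      linarith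
    exact hlin.trans <| mirror_descent_step (hηpos t) (hstrong _ (hx (t + 1)) _ (hx t))
      (hopt t xstar hxstar)
  have htelescope := sum_Icc_sub_div_le_of_antitone (d := d) (M := R ^ 2 / 2) hηpos
    (fun s t hst => hηmono s t hst) (fun t => by linarith [hradius xstar hxstar (x t) (hx t)])
    (τ + 1) T
  have hlast : (R ^ 2 / 2 - d (T + 1)) / η T ≤ R ^ 2 / (2 * η T) := by
    rw [← div_div]
    gcongr
    · exact (hηpos T).le
    · linarith [hstrong xstar hxstar (x (T + 1)) (hx (T + 1)), sq_nonneg ‖xstar - x (T + 1)‖]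
  calc ∑ t ∈ Icc (τ + 1) T, (Φ t (x t) - Φ t xstar)
      ≤ ∑ t ∈ Icc (τ + 1) T, (η t / 2 * ‖g t‖ ^ 2 + (d t - d (t + 1)) / η t) :=
        sum_le_sum fun t _ => hstep t
    _ ≤ R ^ 2 / (2 * η T) + ∑ t ∈ Icc (τ + 1) T, η t / 2 * ‖g t‖ ^ 2 := by
        rw [sum_add_distrib]
        linarith

/-- Mirror descent regret bound (Lemma 2 of the paper). -/
theorem mirror_descent_regret_bound
    {E : Type*} [NormedAddCommGroup E] [NormedSpace ℝ E]
    (X : Set E) (hXne : X.Nonempty) (hXconv : Convex ℝ X)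
    (ψ : E → ℝ) (ψ' : E → StrongDual ℝ E)
    (D : E → E → ℝ)
    (hD : ∀ x y : E, D x y = ψ x - ψ y - ψ' y (x - y))
    (R : ℝ) (hR : 0 < R)
    (hstrong : ∀ x ∈ X, ∀ y ∈ X, (1 / 2 : ℝ) * ‖x - y‖ ^ 2 ≤ D x y)
    (hradius : ∀ x ∈ X, ∀ y ∈ X, D x y ≤ (1 / 2 : ℝ) * R ^ 2)
    (x : ℕ → E) (hx : ∀ t, x t ∈ X)
    (g : ℕ → StrongDual ℝ E)
    (η : ℕ → ℝ) (hηpos : ∀ t, 0 < η t)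
    (hηmono : ∀ s t : ℕ, s ≤ t → η t ≤ η s)
    (hopt : ∀ t : ℕ, ∀ y ∈ X,
      0 ≤ (η t • g t + ψ' (x (t + 1)) - ψ' (x t)) (y - x (t + 1)))
    (Φ : ℕ → E → ℝ)
    (hsub : ∀ t : ℕ, ∀ y ∈ X, Φ t (x t) + g t (y - x t) ≤ Φ t y)
    (xstar : E) (hxstar : xstar ∈ X)
    (τ T : ℕ) (hτT : τ < T) :
    ∑ t ∈ Finset.Icc (τ + 1) T, (Φ t (x t) - Φ t xstar)
      ≤ R ^ 2 / (2 * η T) + ∑ t ∈ Finset.Icc (τ + 1) T, (η t / 2) * ‖g t‖ ^ 2 :=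
  mirror_descent_regret_bound_general X ψ ψ' D hD R hstrong hradius x hx g η hηpos hηmono hopt Φ
    hsub xstar hxstar τ T
end

section
/- Hellinger–Cauchy–Schwarz inequality (core inequality in the proof of Lemma 4 of the paper). Let (S, 𝒜, μ) be a measure space and let h, p, q : S → ℝ be measurable with p ≥ 0 and q ≥ 0 pointwise. Assume that h²·p, h²·q, (√p − √q)², and |h|·|p − q| are μ-integrable. Then ∫ |h(s)|·|p(s) − q(s)| dμ(s) ≤ √2 · ( ∫ h(s)²·p(s) dμ(s) + ∫ h(s)²·q(s) dμ(s) )^{1/2} · ( ∫ (√(p(s)) − √(q(s)))² dμ(s) )^{1/2}. -/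
/-!
Pointwise, `|h| |p - q| ≤ √2 F G` with `F = |h| √(p + q)` and `G = |√p - √q|`, since
`p - q = (√p + √q)(√p - √q)` and `√p + √q ≤ √2 √(p + q)`. Cauchy–Schwarz then bounds `∫ F G`
by `√(∫ F²) √(∫ G²)`, where `∫ F² = ∫ h² p + ∫ h² q` and `∫ G²` is the squared Hellinger distance.
-/

open MeasureTheory

lemma abs_sub_le_sqrt_two_mul_sqrt_add_mul_abs_sqrt_sub {a b : ℝ} (ha : 0 ≤ a) (hb : 0 ≤ b) :
    |a - b| ≤ Real.sqrt 2 * Real.sqrt (a + b) * |Real.sqrt a - Real.sqrt b| := by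
  have hfactor : a - b = (Real.sqrt a + Real.sqrt b) * (Real.sqrt a - Real.sqrt b) := by
    rw [← sq_sub_sq, Real.sq_sqrt ha, Real.sq_sqrt hb]
  have hsum : Real.sqrt a + Real.sqrt b ≤ Real.sqrt 2 * Real.sqrt (a + b) := by
    rw [← Real.sqrt_mul zero_le_two]
    apply Real.le_sqrt_of_sq_le
    nlinarith [Real.sq_sqrt ha, Real.sq_sqrt hb, sq_nonneg (Real.sqrt a - Real.sqrt b)]
  rw [hfactor, abs_mul, abs_of_nonneg (by positivity)]
  exact mul_le_mul_of_nonneg_right hsum (abs_nonneg _)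

section

variable {α : Type*} [MeasurableSpace α] {μ : Measure α} {f g : α → ℝ}

lemma memLp_two_of_nonneg_of_integrable_sq (hf0 : 0 ≤ᵐ[μ] f)
    (hf : Integrable (fun x => f x ^ 2) μ) : MemLp f 2 μ := by
  have hmeas : AEStronglyMeasurable f μ := by
    refine hf.aestronglyMeasurable.aemeasurable.sqrt.aestronglyMeasurable.congr ?_
    filter_upwards [hf0] with x hx
    exact Real.sqrt_sq hx
  exact (memLp_two_iff_integrable_sq hmeas).2 hf

lemma integral_mul_le_sqrt_integral_sq_mul_sqrt_integral_sq_of_nonneg (hf0 : 0 ≤ᵐ[μ] f)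
    (hg0 : 0 ≤ᵐ[μ] g) (hf : MemLp f 2 μ) (hg : MemLp g 2 μ) :
    ∫ x, f x * g x ∂μ ≤ Real.sqrt (∫ x, f x ^ 2 ∂μ) * Real.sqrt (∫ x, g x ^ 2 ∂μ) := by
  have := integral_mul_le_Lp_mul_Lq_of_nonneg Real.HolderConjugate.two_two hf0 hg0
    (by simpa using hf) (by simpa using hg)
  simpa only [Real.rpow_two, Real.sqrt_eq_rpow] using this

end

theorem hellinger_cauchy_schwarz_general
    {S : Type*} [MeasurableSpace S] (μ : Measure S)
    (h p q : S → ℝ)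
    (hp0 : ∀ s, 0 ≤ p s) (hq0 : ∀ s, 0 ≤ q s)
    (hint1 : Integrable (fun s => (h s) ^ 2 * p s) μ)
    (hint2 : Integrable (fun s => (h s) ^ 2 * q s) μ)
    (hint3 : Integrable (fun s => (Real.sqrt (p s) - Real.sqrt (q s)) ^ 2) μ) :
    ∫ s, |h s| * |p s - q s| ∂μ
      ≤ Real.sqrt 2
        * Real.sqrt (∫ s, (h s) ^ 2 * p s ∂μ + ∫ s, (h s) ^ 2 * q s ∂μ)
        * Real.sqrt (∫ s, (Real.sqrt (p s) - Real.sqrt (q s)) ^ 2 ∂μ) := by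
  set F : S → ℝ := fun s => |h s| * Real.sqrt (p s + q s)
  set G : S → ℝ := fun s => |Real.sqrt (p s) - Real.sqrt (q s)|
  have hF0 : 0 ≤ᵐ[μ] F := ae_of_all _ fun s => by positivity
  have hG0 : 0 ≤ᵐ[μ] G := ae_of_all _ fun s => by positivity
  have hF_sq : (fun s => F s ^ 2) = fun s => h s ^ 2 * p s + h s ^ 2 * q s := by
    ext s
    rw [mul_pow, sq_abs, Real.sq_sqrt (add_nonneg (hp0 s) (hq0 s)), mul_add]
  have hG_sq : (fun s => G s ^ 2) = fun s => (Real.sqrt (p s) - Real.sqrt (q s)) ^ 2 := by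
    ext s
    exact sq_abs _
  have hF : MemLp F 2 μ := memLp_two_of_nonneg_of_integrable_sq hF0 (hF_sq ▸ hint1.add hint2)
  have hG : MemLp G 2 μ := memLp_two_of_nonneg_of_integrable_sq hG0 (hG_sq ▸ hint3)
  calc ∫ s, |h s| * |p s - q s| ∂μ
      ≤ ∫ s, Real.sqrt 2 * (F s * G s) ∂μ := by
        refine integral_mono_of_nonneg (ae_of_all _ fun s => by positivity)
          ((hF.integrable_mul hG).const_mul _) (ae_of_all _ fun s => ?_)
        calc |h s| * |p s - q s|
            ≤ |h s| * (Real.sqrt 2 * Real.sqrt (p s + q s) * G s) :=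
              mul_le_mul_of_nonneg_left
                (abs_sub_le_sqrt_two_mul_sqrt_add_mul_abs_sqrt_sub (hp0 s) (hq0 s)) (abs_nonneg _)
          _ = Real.sqrt 2 * (F s * G s) := by ring
    _ = Real.sqrt 2 * ∫ s, F s * G s ∂μ := integral_const_mul _ _
    _ ≤ Real.sqrt 2 * (Real.sqrt (∫ s, F s ^ 2 ∂μ) * Real.sqrt (∫ s, G s ^ 2 ∂μ)) := by
        gcongr
        exact integral_mul_le_sqrt_integral_sq_mul_sqrt_integral_sq_of_nonneg hF0 hG0 hF hG
    _ = _ := by rw [hF_sq, hG_sq, integral_add hint1 hint2, mul_assoc]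

/-- Hellinger–Cauchy–Schwarz inequality (core inequality in the proof of Lemma 4
of the paper). -/
theorem hellinger_cauchy_schwarz
    {S : Type*} [MeasurableSpace S] (μ : Measure S)
    (h p q : S → ℝ)
    (hh : Measurable h) (hp : Measurable p) (hq : Measurable q)
    (hp0 : ∀ s, 0 ≤ p s) (hq0 : ∀ s, 0 ≤ q s)
    (hint1 : Integrable (fun s => (h s) ^ 2 * p s) μ)
    (hint2 : Integrable (fun s => (h s) ^ 2 * q s) μ)
    (hint3 : Integrable (fun s => (Real.sqrt (p s) - Real.sqrt (q s)) ^ 2) μ)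
    (hint4 : Integrable (fun s => |h s| * |p s - q s|) μ) :
    ∫ s, |h s| * |p s - q s| ∂μ
      ≤ Real.sqrt 2
        * Real.sqrt (∫ s, (h s) ^ 2 * p s ∂μ + ∫ s, (h s) ^ 2 * q s ∂μ)
        * Real.sqrt (∫ s, (Real.sqrt (p s) - Real.sqrt (q s)) ^ 2 ∂μ) :=
  hellinger_cauchy_schwarz_general μ h p q hp0 hq0 hint1 hint2 hint3
end

section
/- Conditional stability lemma (first statement of Lemma 5 of the paper). Let (Ω, 𝔉, P) be a probability space with filtration (𝔉_s)_{s∈ℕ}, S a measurable space, E a real normed vector space, X ⊆ E, F : E × S → ℝ measurable, L ≥ 0, and η : ℕ → ℝ nonnegative and nonincreasing. Let ξ_s : Ω → S be 𝔉_s-measurable for each s. Assume: (i) conditional Lipschitz property: for every s and every pair u, v of X-valued 𝔉_s-measurable random vectors (with F(u; ξ_{s+1}) and F(v; ξ_{s+1}) integrable), |E[F(u; ξ_{s+1}) − F(v; ξ_{s+1}) | 𝔉_s]| ≤ L·‖u − v‖ almost surely; (ii) x(s) is an X-valued 𝔉_{s−1}-measurable random vector for each s ≥ 1, and there are nonnegative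 𝔉_s-measurable random variables G(s), square-integrable, with ‖x(s) − x(s+1)‖ ≤ η(s)·G(s) almost surely and E[G(s)² | 𝔉_{s−1}] ≤ L² almost surely. Then for all t ≥ 1 and τ ≥ 0 (with the relevant random variables integrable): E[F(x(t); ξ_{t+τ}) − F(x(t+τ); ξ_{t+τ}) | 𝔉_{t−1}] ≤ τ·η(t)·L² almost surely. -/
/-!
The conditional Lipschitz property at level `t + τ - 1` bounds the conditional drift by
`L ‖x t - x (t + τ)‖`, and telescoping the increments with `η` nonincreasing bounds this by
`L η(t) ∑_{i < τ} G(t + i)`. Conditioning down to `𝔉_{t-1}` by the tower property, each term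
contributes at most `L`, since conditional Jensen turns `E[G² | 𝔉] ≤ L²` into `E[G | 𝔉] ≤ L`.
-/

open MeasureTheory ProbabilityTheory Finset

lemma norm_sub_le_mul_sum_of_antitone {E : Type*} [SeminormedAddCommGroup E] {x : ℕ → E}
    {η G : ℕ → ℝ} (hη : Antitone η) (hG : ∀ s, 0 ≤ G s)
    (hstep : ∀ s, ‖x s - x (s + 1)‖ ≤ η s * G s) (t τ : ℕ) :
    ‖x t - x (t + τ)‖ ≤ η t * ∑ i ∈ range τ, G (t + i) := by
  rw [← dist_eq_norm, mul_sum]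
  refine (dist_le_range_sum_dist (fun i => x (t + i)) τ).trans (sum_le_sum fun i _ => ?_)
  rw [dist_eq_norm, ← add_assoc]
  exact (hstep (t + i)).trans
    (mul_le_mul_of_nonneg_right (hη (Nat.le_add_right t i)) (hG _))

section CondExp

variable {Ω : Type*} {m m' m0 : MeasurableSpace Ω} {μ : Measure Ω}

lemma condExp_sum_ae_le_card_mul {ι : Type*} (s : Finset ι) {G : ι → Ω → ℝ}
    (hG : ∀ i ∈ s, Integrable (G i) μ) {L : ℝ} (hGL : ∀ i ∈ s, μ[G i | m] ≤ᵐ[μ] fun _ => L) :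
    μ[∑ i ∈ s, G i | m] ≤ᵐ[μ] fun _ => #s * L := by
  filter_upwards [condExp_finsetSum hG m, (s.eventually_all).2 hGL] with ω hsum hle
  rw [hsum, Finset.sum_apply, ← nsmul_eq_mul, ← sum_const]
  exact sum_le_sum hle

variable [IsFiniteMeasure μ]

lemma condExp_ae_le_condExp_of_le (hmm' : m ≤ m') (hm' : m' ≤ m0) {f g : Ω → ℝ}
    (hg : Integrable g μ) (hfg : μ[f | m'] ≤ᵐ[μ] g) : μ[f | m] ≤ᵐ[μ] μ[g | m] :=
  (condExp_condExp_of_le hmm' hm').symm.trans_le (condExp_mono integrable_condExp hg hfg)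

lemma sq_condExp_ae_le_condExp_sq (hm : m ≤ m0) {X : Ω → ℝ} (hX : MemLp X 2 μ) :
    μ[X | m] ^ 2 ≤ᵐ[μ] μ[X ^ 2 | m] := by
  filter_upwards [condVar_ae_eq_condExp_sq_sub_sq_condExp hm hX,
    condExp_nonneg (m := m) (ae_of_all μ fun ω => sq_nonneg ((X - μ[X | m]) ω))]
    with ω hvar hvar_nonneg
  have : 0 ≤ Var[X; μ | m] ω := hvar_nonneg
  simpa [hvar] using this

lemma condExp_ae_le_of_condExp_sq_ae_le (hm : m ≤ m0) {X : Ω → ℝ} (hX : MemLp X 2 μ)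
    {L : ℝ} (hL : 0 ≤ L) (hXL : μ[X ^ 2 | m] ≤ᵐ[μ] fun _ => L ^ 2) :
    μ[X | m] ≤ᵐ[μ] fun _ => L := by
  filter_upwards [sq_condExp_ae_le_condExp_sq hm hX, hXL] with ω hsq hle
  exact (abs_le_of_sq_le_sq' (hsq.trans hle) hL).2

end CondExp

theorem conditional_stability_general
    {Ω : Type*} {m0 : MeasurableSpace Ω} (μ : Measure Ω) [IsProbabilityMeasure μ]
    (ℱ : Filtration ℕ m0)
    {S : Type*}
    {E : Type*} [NormedAddCommGroup E]
    (X : Set E)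
    (F : E → S → ℝ)
    (L : ℝ) (hL : 0 ≤ L)
    (η : ℕ → ℝ) (hη0 : ∀ s, 0 ≤ η s)
    (hηmono : ∀ s t : ℕ, s ≤ t → η t ≤ η s)
    (ξ : ℕ → Ω → S)
    -- (i) conditional Lipschitz property
    (hCondLip : ∀ s : ℕ, ∀ u v : Ω → E,
      StronglyMeasurable[ℱ s] u → StronglyMeasurable[ℱ s] v →
      (∀ ω, u ω ∈ X) → (∀ ω, v ω ∈ X) →
      Integrable (fun ω => F (u ω) (ξ (s + 1) ω)) μ →
      Integrable (fun ω => F (v ω) (ξ (s + 1) ω)) μ →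
      ∀ᵐ ω ∂μ,
        |(μ[(fun ω => F (u ω) (ξ (s + 1) ω) - F (v ω) (ξ (s + 1) ω)) | ℱ s]) ω|
          ≤ L * ‖u ω - v ω‖)
    -- (ii) adapted iterates with controlled increments
    (x : ℕ → Ω → E)
    (hxmeas : ∀ s : ℕ, 1 ≤ s → StronglyMeasurable[ℱ (s - 1)] (x s))
    (hxX : ∀ s ω, x s ω ∈ X)
    (G : ℕ → Ω → ℝ)
    (hG0 : ∀ s ω, 0 ≤ G s ω)
    (hGsq : ∀ s, MemLp (G s) 2 μ)
    (hstep : ∀ s : ℕ, ∀ᵐ ω ∂μ, ‖x s ω - x (s + 1) ω‖ ≤ η s * G s ω)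
    (hGcond : ∀ s : ℕ,
      ∀ᵐ ω ∂μ, (μ[(fun ω => (G s ω) ^ 2) | ℱ (s - 1)]) ω ≤ L ^ 2) :
    ∀ t τ : ℕ, 1 ≤ t →
      Integrable (fun ω => F (x t ω) (ξ (t + τ) ω)) μ →
      Integrable (fun ω => F (x (t + τ) ω) (ξ (t + τ) ω)) μ →
      ∀ᵐ ω ∂μ,
        (μ[(fun ω => F (x t ω) (ξ (t + τ) ω) - F (x (t + τ) ω) (ξ (t + τ) ω))
            | ℱ (t - 1)]) ω
          ≤ τ * η t * L ^ 2 := by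
  intro t τ ht hInt₁ hInt₂
  set Gsum : Ω → ℝ := ∑ i ∈ range τ, G (t + i)
  have hGint : ∀ s, Integrable (G s) μ := fun s => (hGsq s).integrable one_le_two
  have hGsum_int : Integrable Gsum μ := integrable_finsetSum' _ fun i _ => hGint (t + i)
  have hlip := hCondLip (t + τ - 1) (x t) (x (t + τ))
    ((hxmeas t ht).mono (ℱ.mono (by omega))) (hxmeas (t + τ) (by omega)) (hxX t) (hxX (t + τ))
  rw [Nat.sub_add_cancel (by omega : 1 ≤ t + τ)] at hlip
  have hdrift : μ[fun ω => F (x t ω) (ξ (t + τ) ω) - F (x (t + τ) ω) (ξ (t + τ) ω)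
      | ℱ (t + τ - 1)] ≤ᵐ[μ] (L * η t) • Gsum := by
    filter_upwards [hlip hInt₁ hInt₂, ae_all_iff.2 hstep] with ω hω hstepω
    calc _ ≤ L * ‖x t ω - x (t + τ) ω‖ := (le_abs_self _).trans hω
      _ ≤ L * (η t * Gsum ω) := by
        gcongr
        simpa [Gsum, Finset.sum_apply] using
          norm_sub_le_mul_sum_of_antitone hηmono (fun s => hG0 s ω) hstepω t τ
      _ = ((L * η t) • Gsum) ω := by simp only [Pi.smul_apply, smul_eq_mul]; ring
  have hGL : ∀ i ∈ range τ, μ[G (t + i) | ℱ (t - 1)] ≤ᵐ[μ] fun _ => L := fun i _ =>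
    (condExp_ae_le_condExp_of_le (ℱ.mono (show t - 1 ≤ t + i - 1 by omega)) (ℱ.le _)
      (integrable_const L)
      (condExp_ae_le_of_condExp_sq_ae_le (ℱ.le _) (hGsq _) hL (hGcond (t + i)))).trans_eq
      (condExp_const (ℱ.le _) L).eventuallyEq
  filter_upwards [condExp_ae_le_condExp_of_le (ℱ.mono (show t - 1 ≤ t + τ - 1 by omega)) (ℱ.le _)
      (hGsum_int.smul (L * η t)) hdrift, condExp_smul (L * η t) Gsum (ℱ (t - 1)),
      condExp_sum_ae_le_card_mul (range τ) (fun i _ => hGint (t + i)) hGL]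
    with ω hmono hsmul hsum
  calc _ ≤ _ := hmono
    _ = L * η t * μ[Gsum | ℱ (t - 1)] ω := by rw [hsmul, Pi.smul_apply, smul_eq_mul]
    _ ≤ L * η t * (#(range τ) * L) := by gcongr; exact mul_nonneg hL (hη0 t)
    _ = τ * η t * L ^ 2 := by rw [card_range]; ring

/-- Conditional stability lemma (first statement of Lemma 5 of the paper). -/
theorem conditional_stability
    {Ω : Type*} {m0 : MeasurableSpace Ω} (μ : Measure Ω) [IsProbabilityMeasure μ]
    (ℱ : Filtration ℕ m0)
    {S : Type*} [MeasurableSpace S]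
    {E : Type*} [NormedAddCommGroup E] [NormedSpace ℝ E]
    [MeasurableSpace E] [BorelSpace E]
    (X : Set E)
    (F : E → S → ℝ) (hF : Measurable (Function.uncurry F))
    (L : ℝ) (hL : 0 ≤ L)
    (η : ℕ → ℝ) (hη0 : ∀ s, 0 ≤ η s)
    (hηmono : ∀ s t : ℕ, s ≤ t → η t ≤ η s)
    (ξ : ℕ → Ω → S) (hξ : ∀ s, Measurable[ℱ s] (ξ s))
    -- (i) conditional Lipschitz property
    (hCondLip : ∀ s : ℕ, ∀ u v : Ω → E,
      StronglyMeasurable[ℱ s] u → StronglyMeasurable[ℱ s] v →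
      (∀ ω, u ω ∈ X) → (∀ ω, v ω ∈ X) →
      Integrable (fun ω => F (u ω) (ξ (s + 1) ω)) μ →
      Integrable (fun ω => F (v ω) (ξ (s + 1) ω)) μ →
      ∀ᵐ ω ∂μ,
        |(μ[(fun ω => F (u ω) (ξ (s + 1) ω) - F (v ω) (ξ (s + 1) ω)) | ℱ s]) ω|
          ≤ L * ‖u ω - v ω‖)
    -- (ii) adapted iterates with controlled increments
    (x : ℕ → Ω → E)
    (hxmeas : ∀ s : ℕ, 1 ≤ s → StronglyMeasurable[ℱ (s - 1)] (x s))
    (hxX : ∀ s ω, x s ω ∈ X)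
    (G : ℕ → Ω → ℝ)
    (hG0 : ∀ s ω, 0 ≤ G s ω)
    (hGmeas : ∀ s, Measurable[ℱ s] (G s))
    (hGsq : ∀ s, MemLp (G s) 2 μ)
    (hstep : ∀ s : ℕ, ∀ᵐ ω ∂μ, ‖x s ω - x (s + 1) ω‖ ≤ η s * G s ω)
    (hGcond : ∀ s : ℕ,
      ∀ᵐ ω ∂μ, (μ[(fun ω => (G s ω) ^ 2) | ℱ (s - 1)]) ω ≤ L ^ 2) :
    ∀ t τ : ℕ, 1 ≤ t →
      Integrable (fun ω => F (x t ω) (ξ (t + τ) ω)) μ →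
      Integrable (fun ω => F (x (t + τ) ω) (ξ (t + τ) ω)) μ →
      ∀ᵐ ω ∂μ,
        (μ[(fun ω => F (x t ω) (ξ (t + τ) ω) - F (x (t + τ) ω) (ξ (t + τ) ω))
            | ℱ (t - 1)]) ω
          ≤ τ * η t * L ^ 2 :=
  conditional_stability_general μ ℱ X F L hL η hη0 hηmono ξ hCondLip x hxmeas hxX G hG0 hGsq hstep
    hGcond
end

section
/- Interleaved-martingale concentration (Proposition 1 of the paper in abstract form). Let (Ω, 𝔉, P) be a probability space with filtration (𝔉_t)_{t∈ℕ}, let L, R > 0, δ ∈ (0,1), and let τ, T be natural numbers with 1 ≤ τ and 2τ ≤ T. Let (Z_t)_{t∈ℕ} be integrable real random variables with Z_t 𝔉_t-measurable, and let (a_t) be real constants such that for every t with τ ≤ t ≤ T: |Z_t − E[Z_t | 𝔉_{t−τ}]| ≤ 2·L·R almost surely and |E[Z_t | 𝔉_{t−τ}]| ≤ a_t almost surely. Then with probability at least 1 − δ: ∑_{t=τ}^{T} Z_t ≤ 4·L·R·√(T·τ·log(τ/δ)) + ∑_{t=τ}^{T} a_t. -/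
/-!
Write `D t = Z t - E[Z t | 𝔉_{t-τ}]`, so that `∑ Z t ≤ ∑ D t + ∑ a t` almost surely. Splitting the
indices `τ ≤ t ≤ T` by their residue `r` modulo `τ`, the terms `D (r + τ), D (r + 2τ), …` form a
martingale difference sequence for the filtration `j ↦ 𝔉_{r + jτ}`, with increments bounded by
`c = 2LR` and at most `T / τ` terms. Azuma's inequality, proved through the conditional Hoeffding
bound `E[exp (λ X) | 𝔊] ≤ exp (λ² c² / 2)`, bounds the probability that a class sum reaches `ε / τ`
by `exp (-ε² / (2 T τ c²))`. A union bound over the `τ` classes gives `P(∑ D t ≥ ε) ≤ δ² / τ ≤ δ`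
for `ε = 2c √(T τ log (τ / δ))`.
-/

open MeasureTheory Finset Real ProbabilityTheory Filter

lemma exp_mul_le_cosh_add_div_mul_sinh {c x : ℝ} (hc : 0 < c) (hx : |x| ≤ c) (l : ℝ) :
    exp (l * x) ≤ cosh (l * c) + x / c * sinh (l * c) := by
  obtain ⟨hxl, hxu⟩ := abs_le.mp hx
  have hw₁ : 0 ≤ (c - x) / (2 * c) := by apply div_nonneg <;> linarith
  have hw₂ : 0 ≤ (c + x) / (2 * c) := by apply div_nonneg <;> linarith
  have hw : (c - x) / (2 * c) + (c + x) / (2 * c) = 1 := by field_simp; ring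
  -- `l * x` is the convex combination of `-l * c` and `l * c` with these weights
  have hconv := convexOn_exp.2 (Set.mem_univ (-l * c)) (Set.mem_univ (l * c)) hw₁ hw₂ hw
  have hlx : ((c - x) / (2 * c)) • (-l * c) + ((c + x) / (2 * c)) • (l * c) = l * x := by
    simp only [smul_eq_mul]; field_simp; ring
  rw [hlx] at hconv
  refine hconv.trans_eq ?_
  simp only [smul_eq_mul, cosh_eq, sinh_eq, neg_mul]
  field_simp
  ring

lemma sum_Icc_eq_sum_range_sum_range_add_succ_mul {M : Type*} [AddCommMonoid M] {τ : ℕ}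
    (hτ : 0 < τ) (T : ℕ) (f : ℕ → M) :
    ∑ t ∈ Icc τ T, f t = ∑ r ∈ range τ, ∑ j ∈ range ((T - r) / τ), f (r + (j + 1) * τ) := by
  have hdecomp : ∀ t, τ ≤ t → t % τ + (t / τ - 1 + 1) * τ = t := fun t ht ↦ by
    have := (Nat.one_le_div_iff hτ).2 ht
    rw [Nat.sub_add_cancel this, Nat.mod_add_div']
  rw [sum_sigma']
  refine sum_nbij' (fun t ↦ ⟨t % τ, t / τ - 1⟩) (fun p ↦ p.1 + (p.2 + 1) * τ) ?_ ?_ ?_ ?_ ?_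
  · intro t ht
    obtain ⟨hτt, htT⟩ := mem_Icc.1 ht
    have hdiv := (Nat.one_le_div_iff hτ).2 hτt
    have hmul : t / τ * τ ≤ T - t % τ := by have := Nat.mod_add_div' t τ; omega
    simp only [mem_sigma, mem_range]
    exact ⟨Nat.mod_lt _ hτ, by have := (Nat.le_div_iff_mul_le hτ).2 hmul; omega⟩
  · rintro ⟨r, j⟩ hp
    simp only [mem_sigma, mem_range] at hp
    have hj : (j + 1) * τ ≤ T - r := (Nat.le_div_iff_mul_le hτ).1 hp.2
    have hτj : τ ≤ (j + 1) * τ := Nat.le_mul_of_pos_left τ (by omega)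
    simp only [mem_Icc]
    omega
  · intro t ht
    exact hdecomp t (mem_Icc.1 ht).1
  · rintro ⟨r, j⟩ hp
    simp only [mem_sigma, mem_range] at hp
    have hmod : (r + (j + 1) * τ) % τ = r := by
      rw [Nat.add_mul_mod_self_right, Nat.mod_eq_of_lt hp.1]
    have hdiv : (r + (j + 1) * τ) / τ = j + 1 := by
      rw [Nat.add_mul_div_right _ _ hτ, Nat.div_eq_of_lt hp.1, zero_add]
    simp only [hmod, hdiv, Nat.add_sub_cancel]
  · intro t ht
    exact congrArg f (hdecomp t (mem_Icc.1 ht).1).symm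

lemma mul_exp_neg_sq_div_le {τ T c δ : ℝ} (hτ : 0 < τ) (hT : 0 < T) (hc : 0 < c) (hδ : 0 < δ)
    (hδτ : δ ≤ τ) :
    τ * exp (-(2 * c * √(T * τ * log (τ / δ))) ^ 2 / (2 * T * τ * c ^ 2)) ≤ δ := by
  have hlog : 0 ≤ log (τ / δ) := log_nonneg ((one_le_div hδ).2 hδτ)
  have hexp : -(2 * c * √(T * τ * log (τ / δ))) ^ 2 / (2 * T * τ * c ^ 2)
      = log ((δ / τ) ^ 2) := by
    have hlog_inv : log (δ / τ) = -log (τ / δ) := by rw [← log_inv, inv_div]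
    rw [mul_pow, sq_sqrt (by positivity), log_pow, hlog_inv]
    field_simp
    push_cast
    ring
  rw [hexp, exp_log (by positivity), div_pow, mul_div_assoc', div_le_iff₀ (by positivity)]
  nlinarith [mul_le_mul_of_nonneg_left hδτ (mul_pos hτ hδ).le]

def MeasureTheory.Filtration.arithProg {Ω : Type*} {m0 : MeasurableSpace Ω}
    (ℱ : Filtration ℕ m0) (r τ : ℕ) : Filtration ℕ m0 where
  seq j := ℱ (r + j * τ)
  mono' _ _ h := ℱ.mono (by gcongr)
  le' _ := ℱ.le _

section Concentration

variable {Ω : Type*} {m0 : MeasurableSpace Ω} {μ : Measure Ω}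

lemma condExp_sub_condExp_ae_eq_zero {m : MeasurableSpace Ω} (hm : m ≤ m0) [SigmaFinite (μ.trim hm)]
    {f : Ω → ℝ} (hf : Integrable f μ) : μ[f - μ[f|m]|m] =ᵐ[μ] 0 := by
  filter_upwards [condExp_sub hf integrable_condExp m] with ω hω
  rw [hω, condExp_of_stronglyMeasurable hm stronglyMeasurable_condExp integrable_condExp,
    Pi.sub_apply, sub_self, Pi.zero_apply]

lemma condExp_exp_mul_le_of_abs_le [IsFiniteMeasure μ] {m : MeasurableSpace Ω} (hm : m ≤ m0)
    {X : Ω → ℝ} {c : ℝ} (hc : 0 < c) (hX : Integrable X μ) (hXc : ∀ᵐ ω ∂μ, |X ω| ≤ c)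
    (hX0 : μ[X|m] =ᵐ[μ] 0) (l : ℝ) :
    μ[fun ω ↦ exp (l * X ω)|m] ≤ᵐ[μ] fun _ ↦ exp (l ^ 2 * c ^ 2 / 2) := by
  set s := sinh (l * c) / c
  set g : Ω → ℝ := (fun _ ↦ cosh (l * c)) + s • X
  have hexp_le : μ[fun ω ↦ exp (l * X ω)|m] ≤ᵐ[μ] μ[g|m] := by
    refine condExp_mono (integrable_exp_mul_of_mem_Icc hX.aemeasurable
      (hXc.mono fun ω ↦ abs_le.mp)) ((integrable_const _).add (hX.smul s)) ?_
    filter_upwards [hXc] with ω hω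
    calc exp (l * X ω) ≤ cosh (l * c) + X ω / c * sinh (l * c) :=
          exp_mul_le_cosh_add_div_mul_sinh hc hω l
      _ = g ω := by simp only [g, s, Pi.add_apply, Pi.smul_apply, smul_eq_mul]; ring
  have hg : μ[g|m] =ᵐ[μ] fun _ ↦ cosh (l * c) := by
    filter_upwards [condExp_add (integrable_const _) (hX.smul s) m, condExp_smul s X m, hX0]
      with ω hadd hsmul hzero
    rw [hadd, Pi.add_apply, hsmul, condExp_const hm, Pi.smul_apply, hzero]
    simp
  filter_upwards [hexp_le, hg] with ω hle heq
  calc _ ≤ μ[g|m] ω := hle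
    _ = cosh (l * c) := heq
    _ ≤ exp (l ^ 2 * c ^ 2 / 2) := by simpa [mul_pow] using cosh_le_exp_half_sq (l * c)

lemma integral_exp_add_le_of_condExp_le [IsFiniteMeasure μ] {m : MeasurableSpace Ω}
    (hm : m ≤ m0) {X Y : Ω → ℝ} {K : ℝ} (hY : StronglyMeasurable[m] Y)
    (hYi : Integrable (fun ω ↦ exp (Y ω)) μ) (hXi : Integrable (fun ω ↦ exp (X ω)) μ)
    (hYXi : Integrable (fun ω ↦ exp (Y ω + X ω)) μ)
    (hK : μ[fun ω ↦ exp (X ω)|m] ≤ᵐ[μ] fun _ ↦ K) :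
    ∫ ω, exp (Y ω + X ω) ∂μ ≤ K * ∫ ω, exp (Y ω) ∂μ := by
  have hmul : (fun ω ↦ exp (Y ω + X ω)) = (fun ω ↦ exp (Y ω)) * fun ω ↦ exp (X ω) := by
    ext ω; simp [exp_add]
  have hpull := condExp_mul_of_stronglyMeasurable_left (m := m)
    (continuous_exp.comp_stronglyMeasurable hY) (hmul ▸ hYXi) hXi
  calc ∫ ω, exp (Y ω + X ω) ∂μ = ∫ ω, exp (Y ω) * μ[fun ω ↦ exp (X ω)|m] ω ∂μ := by
        rw [← integral_condExp hm, hmul]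
        exact integral_congr_ae hpull
    _ ≤ ∫ ω, exp (Y ω) * K ∂μ := by
        refine integral_mono_of_nonneg ?_ (hYi.mul_const K) ?_
        · filter_upwards [condExp_nonneg (m := m) (ae_of_all μ fun ω ↦ (exp_pos (X ω)).le)]
            with ω hω
          exact mul_nonneg (exp_pos _).le hω
        · filter_upwards [hK] with ω hω
          exact mul_le_mul_of_nonneg_left hω (exp_pos _).le
    _ = K * ∫ ω, exp (Y ω) ∂μ := by rw [integral_mul_const, mul_comm]

lemma ae_abs_sum_range_le {X : ℕ → Ω → ℝ} {c : ℝ} {n : ℕ}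
    (hXc : ∀ k < n, ∀ᵐ ω ∂μ, |X k ω| ≤ c) : ∀ᵐ ω ∂μ, |∑ k ∈ range n, X k ω| ≤ n * c := by
  filter_upwards [(eventually_all_finset (range n)).2 fun k hk ↦ hXc k (mem_range.1 hk)]
    with ω hω
  calc |∑ k ∈ range n, X k ω| ≤ ∑ k ∈ range n, |X k ω| := abs_sum_le_sum_abs _ _
    _ ≤ ∑ k ∈ range n, c := sum_le_sum hω
    _ = n * c := by rw [sum_const, card_range, nsmul_eq_mul]

lemma integrable_exp_mul_sum_range [IsFiniteMeasure μ] (𝒢 : Filtration ℕ m0) {X : ℕ → Ω → ℝ}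
    {c : ℝ} {n : ℕ}
    (hX : ∀ k < n, StronglyMeasurable[𝒢 (k + 1)] (X k))
    (hXc : ∀ k < n, ∀ᵐ ω ∂μ, |X k ω| ≤ c) (l : ℝ) :
    Integrable (fun ω ↦ exp (l * ∑ k ∈ range n, X k ω)) μ := by
  refine integrable_exp_mul_of_mem_Icc ?_ ((ae_abs_sum_range_le hXc).mono fun ω ↦ abs_le.mp)
  exact (Finset.measurable_fun_sum _ fun k hk ↦
    ((hX k (mem_range.1 hk)).mono (𝒢.le _)).measurable).aemeasurable

variable [IsProbabilityMeasure μ] {X : ℕ → Ω → ℝ} {c : ℝ}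

lemma ofReal_one_sub_le_of_measure_compl_le {s : Set Ω} {δ : ℝ} (hδ : 0 ≤ δ)
    (h : μ sᶜ ≤ ENNReal.ofReal δ) : ENNReal.ofReal (1 - δ) ≤ μ s := by
  rw [ENNReal.ofReal_sub _ hδ, ENNReal.ofReal_one, tsub_le_iff_right]
  calc 1 = μ Set.univ := measure_univ.symm
    _ ≤ μ s + μ sᶜ := measure_univ_le_add_compl s
    _ ≤ μ s + ENNReal.ofReal δ := by gcongr

lemma integral_exp_mul_sum_range_le (𝒢 : Filtration ℕ m0) (hc : 0 < c) {n : ℕ}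
    (hX : ∀ k < n, StronglyMeasurable[𝒢 (k + 1)] (X k))
    (hXc : ∀ k < n, ∀ᵐ ω ∂μ, |X k ω| ≤ c) (hX0 : ∀ k < n, μ[X k|𝒢 k] =ᵐ[μ] 0) (l : ℝ) :
    ∫ ω, exp (l * ∑ k ∈ range n, X k ω) ∂μ ≤ exp (n * (l ^ 2 * c ^ 2 / 2)) := by
  induction n with
  | zero => simp
  | succ n ih =>
    have hX' : ∀ k < n, StronglyMeasurable[𝒢 (k + 1)] (X k) := fun k hk ↦ hX k (by omega)
    have hXc' : ∀ k < n, ∀ᵐ ω ∂μ, |X k ω| ≤ c := fun k hk ↦ hXc k (by omega)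
    have hY : StronglyMeasurable[𝒢 n] fun ω ↦ l * ∑ k ∈ range n, X k ω :=
      (Finset.stronglyMeasurable_fun_sum _ fun k hk ↦
        (hX' k (mem_range.1 hk)).mono (𝒢.mono (mem_range.1 hk))).const_mul l
    have hXn : Integrable (X n) μ :=
      .of_bound ((hX n n.lt_succ_self).mono (𝒢.le _)).aestronglyMeasurable c
        ((hXc n n.lt_succ_self).mono fun ω h ↦ (Real.norm_eq_abs _).trans_le h)
    have hsucc : ∀ ω, l * ∑ k ∈ range (n + 1), X k ω = l * ∑ k ∈ range n, X k ω + l * X n ω :=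
      fun ω ↦ by rw [sum_range_succ, mul_add]
    calc ∫ ω, exp (l * ∑ k ∈ range (n + 1), X k ω) ∂μ
        = ∫ ω, exp (l * ∑ k ∈ range n, X k ω + l * X n ω) ∂μ := by simp_rw [hsucc]
      _ ≤ exp (l ^ 2 * c ^ 2 / 2) * ∫ ω, exp (l * ∑ k ∈ range n, X k ω) ∂μ :=
          integral_exp_add_le_of_condExp_le (𝒢.le n) hY
            (integrable_exp_mul_sum_range 𝒢 hX' hXc' l)
            (integrable_exp_mul_of_mem_Icc hXn.aemeasurable
              ((hXc n n.lt_succ_self).mono fun ω ↦ abs_le.mp))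
            (by simpa only [hsucc] using integrable_exp_mul_sum_range 𝒢 hX hXc l)
            (condExp_exp_mul_le_of_abs_le (𝒢.le n) hc hXn (hXc n n.lt_succ_self)
              (hX0 n n.lt_succ_self) l)
      _ ≤ exp (l ^ 2 * c ^ 2 / 2) * exp (n * (l ^ 2 * c ^ 2 / 2)) := by
          gcongr
          exact ih hX' hXc' fun k hk ↦ hX0 k (by omega)
      _ = exp ((n + 1 : ℕ) * (l ^ 2 * c ^ 2 / 2)) := by rw [← exp_add]; congr 1; push_cast; ring

lemma measure_sum_range_ge_le (𝒢 : Filtration ℕ m0) (hc : 0 < c) {n : ℕ}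
    (hX : ∀ k < n, StronglyMeasurable[𝒢 (k + 1)] (X k))
    (hXc : ∀ k < n, ∀ᵐ ω ∂μ, |X k ω| ≤ c) (hX0 : ∀ k < n, μ[X k|𝒢 k] =ᵐ[μ] 0)
    {v ε : ℝ} (hv : 0 < v) (hnv : n * c ^ 2 ≤ v) (hε : 0 ≤ ε) :
    μ {ω | ε ≤ ∑ k ∈ range n, X k ω} ≤ ENNReal.ofReal (exp (-ε ^ 2 / (2 * v))) := by
  -- Chernoff's bound at the optimal parameter `ε / v`
  set l := ε / v
  have hl : 0 ≤ l := div_nonneg hε hv.le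
  rw [ENNReal.le_ofReal_iff_toReal_le (measure_ne_top μ _) (exp_pos _).le]
  calc μ.real {ω | ε ≤ ∑ k ∈ range n, X k ω}
      ≤ exp (-l * ε) * mgf (fun ω ↦ ∑ k ∈ range n, X k ω) μ l :=
        measure_ge_le_exp_mul_mgf ε hl (integrable_exp_mul_sum_range 𝒢 hX hXc l)
    _ ≤ exp (-l * ε) * exp (n * (l ^ 2 * c ^ 2 / 2)) := by
        gcongr
        exact integral_exp_mul_sum_range_le 𝒢 hc hX hXc hX0 l
    _ ≤ exp (-l * ε) * exp (l ^ 2 * v / 2) := by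
        gcongr
        nlinarith [sq_nonneg l]
    _ = exp (-ε ^ 2 / (2 * v)) := by
        rw [← exp_add]
        congr 1
        simp only [l]
        field_simp
        ring

lemma measure_sum_range_lag_ge_le (ℱ : Filtration ℕ m0) {τ T : ℕ} (hτ : 0 < τ) (hT : 0 < T)
    (hc : 0 < c) {D : ℕ → Ω → ℝ} (hD : ∀ t, StronglyMeasurable[ℱ t] (D t))
    (hDc : ∀ t, τ ≤ t → t ≤ T → ∀ᵐ ω ∂μ, |D t ω| ≤ c)
    (hD0 : ∀ t, τ ≤ t → t ≤ T → μ[D t|ℱ (t - τ)] =ᵐ[μ] 0) (r : ℕ) {ε : ℝ} (hε : 0 ≤ ε) :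
    μ {ω | ε ≤ ∑ j ∈ range ((T - r) / τ), D (r + (j + 1) * τ) ω}
      ≤ ENNReal.ofReal (exp (-ε ^ 2 / (2 * (T * c ^ 2 / τ)))) := by
  have hmem : ∀ j < (T - r) / τ, τ ≤ r + (j + 1) * τ ∧ r + (j + 1) * τ ≤ T := fun j hj ↦ by
    have h₁ : (j + 1) * τ ≤ T - r := (Nat.le_div_iff_mul_le hτ).1 hj
    have h₂ : τ ≤ (j + 1) * τ := Nat.le_mul_of_pos_left τ (by omega)
    omega
  have hlag : ∀ j, r + (j + 1) * τ - τ = r + j * τ := fun j ↦ by rw [add_one_mul]; omega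
  have hn : ((T - r) / τ : ℕ) * τ ≤ T := (Nat.div_mul_le_self _ _).trans (Nat.sub_le _ _)
  have hnv : (((T - r) / τ : ℕ) : ℝ) * c ^ 2 ≤ T * c ^ 2 / τ := by
    rw [le_div_iff₀ (Nat.cast_pos.2 hτ), mul_right_comm]
    gcongr
    exact_mod_cast hn
  exact measure_sum_range_ge_le (ℱ.arithProg r τ) (X := fun j ↦ D (r + (j + 1) * τ)) hc
    (fun j _ ↦ hD _) (fun j hj ↦ hDc _ (hmem j hj).1 (hmem j hj).2)
    (fun j hj ↦ (hlag j ▸ hD0 _ (hmem j hj).1 (hmem j hj).2 :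
      μ[D (r + (j + 1) * τ)|ℱ (r + j * τ)] =ᵐ[μ] 0))
    (by positivity) hnv hε

lemma measure_sum_Icc_ge_le_of_condExp_lag_eq_zero (ℱ : Filtration ℕ m0) {τ T : ℕ} (hτ : 0 < τ)
    (hT : 0 < T) (hc : 0 < c) {D : ℕ → Ω → ℝ} (hD : ∀ t, StronglyMeasurable[ℱ t] (D t))
    (hDc : ∀ t, τ ≤ t → t ≤ T → ∀ᵐ ω ∂μ, |D t ω| ≤ c)
    (hD0 : ∀ t, τ ≤ t → t ≤ T → μ[D t|ℱ (t - τ)] =ᵐ[μ] 0) {ε : ℝ} (hε : 0 ≤ ε) :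
    μ {ω | ε ≤ ∑ t ∈ Icc τ T, D t ω}
      ≤ ENNReal.ofReal (τ * exp (-ε ^ 2 / (2 * T * τ * c ^ 2))) := by
  have hτ' : (0 : ℝ) < τ := Nat.cast_pos.2 hτ
  have hclass : ∀ r ∈ range τ,
      μ {ω | ε / τ ≤ ∑ j ∈ range ((T - r) / τ), D (r + (j + 1) * τ) ω}
        ≤ ENNReal.ofReal (exp (-ε ^ 2 / (2 * T * τ * c ^ 2))) := fun r _ ↦ by
    convert measure_sum_range_lag_ge_le ℱ hτ hT hc hD hDc hD0 r (div_nonneg hε hτ'.le) using 3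
    field_simp
  calc μ {ω | ε ≤ ∑ t ∈ Icc τ T, D t ω}
      ≤ μ (⋃ r ∈ range τ, {ω | ε / τ ≤ ∑ j ∈ range ((T - r) / τ), D (r + (j + 1) * τ) ω}) := by
        refine measure_mono fun ω (hω : ε ≤ ∑ t ∈ Icc τ T, D t ω) ↦ ?_
        rw [sum_Icc_eq_sum_range_sum_range_add_succ_mul hτ] at hω
        have hε_split : ∑ _r ∈ range τ, ε / τ = ε := by
          rw [sum_const, card_range, nsmul_eq_mul]; field_simp
        obtain ⟨r, hr, hle⟩ := exists_le_of_sum_le (nonempty_range_iff.2 hτ.ne')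
          (hε_split.trans_le hω)
        exact Set.mem_biUnion hr hle
    _ ≤ ∑ r ∈ range τ, μ {ω | ε / τ ≤ ∑ j ∈ range ((T - r) / τ), D (r + (j + 1) * τ) ω} :=
        measure_biUnion_finset_le _ _
    _ ≤ ∑ _r ∈ range τ, ENNReal.ofReal (exp (-ε ^ 2 / (2 * T * τ * c ^ 2))) := sum_le_sum hclass
    _ = ENNReal.ofReal (τ * exp (-ε ^ 2 / (2 * T * τ * c ^ 2))) := by
        rw [sum_const, card_range, nsmul_eq_mul, ENNReal.ofReal_mul hτ'.le, ENNReal.ofReal_natCast]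

end Concentration

/-- Interleaved-martingale concentration (Proposition 1 of the paper in abstract
form). -/
theorem interleaved_martingale_concentration
    {Ω : Type*} {m0 : MeasurableSpace Ω} (μ : Measure Ω) [IsProbabilityMeasure μ]
    (ℱ : Filtration ℕ m0)
    (L R : ℝ) (hL : 0 < L) (hR : 0 < R)
    (δ : ℝ) (hδ0 : 0 < δ) (hδ1 : δ < 1)
    (τ T : ℕ) (hτ : 1 ≤ τ) (hτT : 2 * τ ≤ T)
    (Z : ℕ → Ω → ℝ)
    (hZint : ∀ t, Integrable (Z t) μ)
    (hZmeas : ∀ t, StronglyMeasurable[ℱ t] (Z t))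
    (a : ℕ → ℝ)
    (hbdd : ∀ t : ℕ, τ ≤ t → t ≤ T →
      ∀ᵐ ω ∂μ, |Z t ω - (μ[Z t | ℱ (t - τ)]) ω| ≤ 2 * L * R)
    (hcond : ∀ t : ℕ, τ ≤ t → t ≤ T →
      ∀ᵐ ω ∂μ, |(μ[Z t | ℱ (t - τ)]) ω| ≤ a t) :
    ENNReal.ofReal (1 - δ)
      ≤ μ {ω | ∑ t ∈ Finset.Icc τ T, Z t ω
          ≤ 4 * L * R * Real.sqrt ((T : ℝ) * τ * Real.log (τ / δ))
            + ∑ t ∈ Finset.Icc τ T, a t} := by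
  have hc : 0 < 2 * L * R := by positivity
  set ε := 4 * L * R * √((T : ℝ) * τ * log (τ / δ))
  set D : ℕ → Ω → ℝ := fun t ↦ Z t - μ[Z t|ℱ (t - τ)]
  have htail := measure_sum_Icc_ge_le_of_condExp_lag_eq_zero ℱ hτ (by omega) hc (D := D)
    (fun t ↦ (hZmeas t).sub (stronglyMeasurable_condExp.mono (ℱ.mono (Nat.sub_le t τ)))) hbdd
    (fun t _ _ ↦ condExp_sub_condExp_ae_eq_zero (ℱ.le _) (hZint t)) (ε := ε) (by positivity)
  have hδ : τ * exp (-ε ^ 2 / (2 * T * τ * (2 * L * R) ^ 2)) ≤ δ := by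
    have hε : ε = 2 * (2 * L * R) * √((T : ℝ) * τ * log (τ / δ)) := by ring
    rw [hε]
    exact mul_exp_neg_sq_div_le (by positivity) (Nat.cast_pos.2 (by omega)) hc hδ0
      (hδ1.le.trans (by exact_mod_cast hτ))
  have hbad : {ω | ∑ t ∈ Icc τ T, Z t ω ≤ ε + ∑ t ∈ Icc τ T, a t}ᶜ
      ≤ᵐ[μ] {ω | ε ≤ ∑ t ∈ Icc τ T, D t ω} := by
    filter_upwards [(eventually_all_finset (Icc τ T)).2 fun t ht ↦
      hcond t (mem_Icc.1 ht).1 (mem_Icc.1 ht).2] with ω hω (hgood : ¬_ ≤ _)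
    have hsplit : ∑ t ∈ Icc τ T, Z t ω
        = ∑ t ∈ Icc τ T, D t ω + ∑ t ∈ Icc τ T, μ[Z t|ℱ (t - τ)] ω := by
      rw [← sum_add_distrib]
      simp [D]
    have hmean := sum_le_sum fun t ht ↦ (abs_le.1 (hω t ht)).2
    show ε ≤ _
    linarith
  exact ofReal_one_sub_le_of_measure_compl_le hδ0.le
    ((measure_mono_ae hbad).trans (htail.trans (ENNReal.ofReal_le_ofReal hδ)))
end

section
/- Convergence rate under geometric mixing (Corollary 2 of the paper). Assume all hypotheses of the expected-convergence theorem for Ergodic Mirror Descent (mirror-descent setup with strong convexity D(x,y) ≥ (1/2)‖x−y‖² and radius D(x,y) ≤ (1/2)R² on X; adapted EMD iterates with subgradients g(t) of F(·;ξ_t) at x(t), ‖g(t)‖_* ≤ L, and the first-order optimality condition; F(·;s) convex and L-Lipschitz on X for each s; f(x) = ∫ F(x;s) dπ(s)), with stepsizes η(t) = a/√t for some a > 0. Let κ₁ > 0, κ₂ > 0, let ε ∈ (0, κ₂) be such that κ₁·log(κ₂/ε) ≥ 1, and suppose there exists a natural number τ with 1 ≤ τ ≤ κ₁·log(κ₂/ε)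 for which the mixing hypothesis holds: for every t ≥ 1 and every X-valued 𝔉_t-measurable random vector u, |E[f(u) − f(x*) − F(u; ξ_{t+τ}) + F(x*; ξ_{t+τ}) | 𝔉_t]| ≤ ε·L·R almost surely. Then, with x̂(T) := (1/T)·∑_{t=1}^{T} x(t), for every T ≥ 1: E[ f(x̂(T)) − f(x*) ] ≤ R²/(2·a·√T) + (2·a·L²/√T)·κ₁·log(κ₂/ε) + ε·L·R + R·L·κ₁·log(κ₂/ε)/T. -/
open MeasureTheory Finset

/-!
Pathwise, each mirror step moves the iterate by at most `η t * L` and satisfies the regret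
inequality `F(x t; ξ t) - F(x*; ξ t) ≤ (D(x*, x t) - D(x*, x (t+1))) / η t + η t * L² / 2`, which
telescopes by Abel summation (using `0 ≤ D ≤ R² / 2` and `∑ 1/√t ≤ 2√T`) to
`R²√T / (2a) + a L² √T`. Since `x (t+1)` is `𝔉 t`-measurable, the mixing hypothesis trades
`E[f(x (t+1)) - f(x*)]` for `E[F(x (t+1); ξ (t+τ)) - F(x*; ξ (t+τ))]` at a cost `ε L R`.
Replacing `x (t+1)` by `x (t+τ)` costs `L² (τ-1) η t` because the iterates move slowly, and the
resulting regret sum overshoots `T` by at most `τ - 1` terms, each at most `L R`. Jensen's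
inequality for the convex `f` passes to the averaged iterate, and `τ ≤ κ₁ log(κ₂/ε)` gives the
constants.
-/

lemma sum_Icc_inv_sqrt_le (T : ℕ) : ∑ s ∈ Icc 1 T, (√(s : ℝ))⁻¹ ≤ 2 * √(T : ℝ) := by
  induction T with
  | zero => simp
  | succ n ih =>
    rw [sum_Icc_succ_top (by omega)]
    set b := √((n + 1 : ℕ) : ℝ)
    have hb : 0 < b := Real.sqrt_pos.mpr (by positivity)
    have hab : √(n : ℝ) ≤ b := Real.sqrt_le_sqrt (by simp)
    have hsq : b ^ 2 = √(n : ℝ) ^ 2 + 1 := by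
      rw [Real.sq_sqrt (by positivity), Real.sq_sqrt (by positivity)]; push_cast; ring
    -- `1 ≤ 2 b (b - √n)` because `b² - √n² = 1` and `√n ≤ b`
    have hstep : b⁻¹ ≤ 2 * (b - √(n : ℝ)) := by
      rw [inv_le_iff_one_le_mul₀' hb]; nlinarith
    linarith

lemma sum_inv_sqrt_le_of_subset {s : Finset ℕ} {T : ℕ} (hs : s ⊆ Icc 1 T) :
    ∑ i ∈ s, (√(i : ℝ))⁻¹ ≤ 2 * √(T : ℝ) :=
  (sum_le_sum_of_subset_of_nonneg hs fun _ _ _ => by positivity).trans (sum_Icc_inv_sqrt_le T)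

lemma sum_Icc_sub_mul_le {d w : ℕ → ℝ} {C : ℝ} (hd0 : ∀ s, 0 ≤ d s) (hdC : ∀ s, d s ≤ C)
    (hw0 : ∀ s, 0 ≤ w s) (hw : Monotone w) (m T : ℕ) :
    ∑ s ∈ Icc m T, (d s - d (s + 1)) * w s ≤ C * w T := by
  suffices h : ∑ s ∈ Icc m T, (d s - d (s + 1)) * w s + d (T + 1) * w T ≤ C * w T by
    nlinarith [mul_nonneg (hd0 (T + 1)) (hw0 T)]
  induction T with
  | zero =>
    rcases Nat.eq_zero_or_pos m with rfl | hm
    · simp only [Icc_self, sum_singleton, zero_add]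
      linarith [mul_le_mul_of_nonneg_right (hdC 0) (hw0 0)]
    · simpa [Icc_eq_empty_of_lt hm] using mul_le_mul_of_nonneg_right (hdC 1) (hw0 0)
  | succ n ih =>
    have hwn : w n ≤ w (n + 1) := hw n.le_succ
    by_cases hm : m ≤ n + 1
    · rw [sum_Icc_succ_top hm]
      nlinarith [hdC (n + 1), hd0 (n + 1)]
    · simpa [Icc_eq_empty_of_lt (not_le.mp hm)] using
        mul_le_mul_of_nonneg_right (hdC (n + 2)) (hw0 (n + 1))

lemma norm_sub_le_mul_of_norm_succ_sub_le {E : Type*} [SeminormedAddCommGroup E] {u : ℕ → E}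
    {c : ℝ} {t : ℕ} (h : ∀ s, t ≤ s → ‖u (s + 1) - u s‖ ≤ c) (k : ℕ) :
    ‖u (t + k) - u t‖ ≤ k * c := by
  induction k with
  | zero => simp
  | succ k ih =>
    calc ‖u (t + (k + 1)) - u t‖ ≤ ‖u (t + k + 1) - u (t + k)‖ + ‖u (t + k) - u t‖ :=
          norm_sub_le_norm_sub_add_norm_sub _ _ _
      _ ≤ c + k * c := add_le_add (h _ (by omega)) ih
      _ = (k + 1 : ℕ) * c := by push_cast; ring

lemma sum_Ico_add_le_sum_Icc_add (c : ℕ → ℝ) {M : ℝ} (hM : 0 ≤ M) (hcM : ∀ s, c s ≤ M)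
    {τ : ℕ} (hτ : 1 ≤ τ) (T : ℕ) :
    ∑ t ∈ Ico 1 T, c (t + τ) ≤ ∑ s ∈ Icc (τ + 1) T, c s + (τ - 1 : ℝ) * M := by
  rw [sum_Ico_add', ← sum_filter_add_sum_filter_not _ (· ≤ T)]
  have hhead : (Ico (1 + τ) (T + τ)).filter (· ≤ T) = Icc (τ + 1) T := by
    ext s; simp only [mem_filter, mem_Ico, mem_Icc]; omega
  have htail : (Ico (1 + τ) (T + τ)).filter (fun s => ¬ s ≤ T) ⊆ Ico (T + 1) (T + τ) := by
    intro s; simp only [mem_filter, mem_Ico]; omega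
  have hcard : (#((Ico (1 + τ) (T + τ)).filter (fun s => ¬ s ≤ T)) : ℝ) ≤ τ - 1 := by
    have h : #((Ico (1 + τ) (T + τ)).filter (fun s => ¬ s ≤ T)) ≤ τ - 1 :=
      (card_le_card htail).trans_eq (by rw [Nat.card_Ico]; omega)
    exact (Nat.cast_le.mpr h).trans_eq (by rw [Nat.cast_sub hτ, Nat.cast_one])
  rw [hhead]
  gcongr
  exact (sum_le_card_nsmul _ _ _ fun s _ => hcM s).trans_eq (nsmul_eq_mul _ _) |>.trans
    (mul_le_mul_of_nonneg_right hcard hM)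

lemma sum_Icc_le_of_le_sub_div_add {c d : ℕ → ℝ} {a L R : ℝ} (ha : 0 < a) (hd0 : ∀ s, 0 ≤ d s)
    (hdR : ∀ s, d s ≤ R ^ 2 / 2)
    (hc : ∀ s, 1 ≤ s → c s ≤ (d s - d (s + 1)) / (a / √(s : ℝ)) + a / √(s : ℝ) * L ^ 2 / 2)
    {m : ℕ} (hm : 1 ≤ m) (T : ℕ) :
    ∑ s ∈ Icc m T, c s ≤ R ^ 2 * √(T : ℝ) / (2 * a) + a * L ^ 2 * √(T : ℝ) := by
  have hterm : ∀ s ∈ Icc m T,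
      c s ≤ (d s - d (s + 1)) * √(s : ℝ) / a + a * L ^ 2 / 2 * (√(s : ℝ))⁻¹ := fun s hs =>
    (hc s (hm.trans (mem_Icc.mp hs).1)).trans_eq (by rw [div_div_eq_mul_div]; ring)
  have htelescope := sum_Icc_sub_mul_le hd0 hdR (fun s => Real.sqrt_nonneg (s : ℝ))
    (fun _ _ h => Real.sqrt_le_sqrt (Nat.cast_le.mpr h)) m T
  have hinv := sum_inv_sqrt_le_of_subset (Icc_subset_Icc_left hm : Icc m T ⊆ Icc 1 T)
  calc ∑ s ∈ Icc m T, c s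
      ≤ (∑ s ∈ Icc m T, (d s - d (s + 1)) * √(s : ℝ)) / a
          + a * L ^ 2 / 2 * ∑ s ∈ Icc m T, (√(s : ℝ))⁻¹ := by
        rw [sum_div, mul_sum, ← sum_add_distrib]; exact sum_le_sum hterm
    _ ≤ R ^ 2 / 2 * √(T : ℝ) / a + a * L ^ 2 / 2 * (2 * √(T : ℝ)) := by gcongr
    _ = R ^ 2 * √(T : ℝ) / (2 * a) + a * L ^ 2 * √(T : ℝ) := by field_simp

lemma sum_Ico_delay_sub_le {E : Type*} [SeminormedAddCommGroup E] {X : Set E} {ℓ : ℕ → E → ℝ}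
    {u : ℕ → E} {a L : ℝ} (ha : 0 ≤ a) (hL : 0 ≤ L)
    (hℓ : ∀ s, ∀ p ∈ X, ∀ q ∈ X, |ℓ s p - ℓ s q| ≤ L * ‖p - q‖) (hu : ∀ s, u s ∈ X)
    (hmove : ∀ s, 1 ≤ s → ‖u (s + 1) - u s‖ ≤ a / √(s : ℝ) * L) {τ : ℕ} (hτ : 1 ≤ τ) (T : ℕ) :
    ∑ t ∈ Ico 1 T, (ℓ (t + τ) (u (t + 1)) - ℓ (t + τ) (u (t + τ)))
      ≤ 2 * (τ - 1) * a * L ^ 2 * √(T : ℝ) := by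
  have hterm : ∀ t ∈ Ico 1 T, ℓ (t + τ) (u (t + 1)) - ℓ (t + τ) (u (t + τ))
      ≤ (τ - 1) * a * L ^ 2 * (√(t : ℝ))⁻¹ := by
    intro t ht
    have ht1 : 1 ≤ t := (mem_Ico.mp ht).1
    have hstep : ∀ s, t + 1 ≤ s → ‖u (s + 1) - u s‖ ≤ a / √(t : ℝ) * L := fun s hs =>
      (hmove s (by omega)).trans <| by
        have : (0 : ℝ) < t := by exact_mod_cast ht1
        gcongr
        exact_mod_cast (by omega : t ≤ s)
    have hdrift := norm_sub_le_mul_of_norm_succ_sub_le hstep (τ - 1)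
    rw [show t + 1 + (τ - 1) = t + τ by omega, Nat.cast_sub hτ, Nat.cast_one] at hdrift
    calc ℓ (t + τ) (u (t + 1)) - ℓ (t + τ) (u (t + τ))
        ≤ L * ‖u (t + τ) - u (t + 1)‖ := by
          rw [norm_sub_rev]; exact (le_abs_self _).trans (hℓ _ _ (hu _) _ (hu _))
      _ ≤ L * ((τ - 1) * (a / √(t : ℝ) * L)) := by gcongr
      _ = (τ - 1) * a * L ^ 2 * (√(t : ℝ))⁻¹ := by ring
  have hτ' : (0 : ℝ) ≤ τ - 1 := by rw [sub_nonneg]; exact_mod_cast hτ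
  calc _ ≤ ∑ t ∈ Ico 1 T, (τ - 1) * a * L ^ 2 * (√(t : ℝ))⁻¹ := sum_le_sum hterm
    _ = (τ - 1) * a * L ^ 2 * ∑ t ∈ Ico 1 T, (√(t : ℝ))⁻¹ := by rw [mul_sum]
    _ ≤ (τ - 1) * a * L ^ 2 * (2 * √(T : ℝ)) := by
        gcongr; exact sum_inv_sqrt_le_of_subset Ico_subset_Icc_self
    _ = 2 * (τ - 1) * a * L ^ 2 * √(T : ℝ) := by ring

lemma norm_sub_le_of_bregman_le_sq {E : Type*} [SeminormedAddCommGroup E] {X : Set E}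
    {D : E → E → ℝ} {R : ℝ} (hR : 0 ≤ R)
    (hstrong : ∀ x ∈ X, ∀ y ∈ X, (1 / 2 : ℝ) * ‖x - y‖ ^ 2 ≤ D x y)
    (hradius : ∀ x ∈ X, ∀ y ∈ X, D x y ≤ (1 / 2 : ℝ) * R ^ 2) {x y : E} (hx : x ∈ X)
    (hy : y ∈ X) : ‖x - y‖ ≤ R :=
  abs_le_of_sq_le_sq' (by linarith [hstrong x hx y hy, hradius x hx y hy]) hR |>.2

section MirrorStep

variable {E : Type*} [NormedAddCommGroup E] [NormedSpace ℝ E] {X : Set E}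
  {ψ : E → ℝ} {ψ' : E → StrongDual ℝ E} {D : E → E → ℝ}

lemma bregman_three_point (hD : ∀ x y, D x y = ψ x - ψ y - ψ' y (x - y)) (y u v : E) :
    ψ' v (y - v) - ψ' u (y - v) = D y u - D y v - D v u := by
  simp only [hD, map_sub]; ring

lemma mirror_step_bregman_le (hD : ∀ x y, D x y = ψ x - ψ y - ψ' y (x - y))
    {u v z : E} {G : StrongDual ℝ E} {η : ℝ} (hopt : 0 ≤ (η • G + ψ' v - ψ' u) (z - v)) :
    D z v + D v u ≤ D z u + η * G (z - v) := by
  have := bregman_three_point hD z u v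
  simp only [add_apply, sub_apply, smul_apply, smul_eq_mul] at hopt
  linarith

lemma mirror_step_norm_sub_le (hD : ∀ x y, D x y = ψ x - ψ y - ψ' y (x - y))
    (hstrong : ∀ x ∈ X, ∀ y ∈ X, (1 / 2 : ℝ) * ‖x - y‖ ^ 2 ≤ D x y) {u v : E} (hu : u ∈ X)
    (hv : v ∈ X) {G : StrongDual ℝ E} {η L : ℝ} (hη : 0 ≤ η) (hG : ‖G‖ ≤ L)
    (hopt : 0 ≤ (η • G + ψ' v - ψ' u) (u - v)) : ‖v - u‖ ≤ η * L := by
  have hbreg := mirror_step_bregman_le hD hopt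
  have huu : D u u = 0 := by simp [hD]
  have hGuv : G (u - v) ≤ L * ‖u - v‖ := (le_abs_self _).trans (G.le_of_opNorm_le hG _)
  have huv := hstrong u hu v hv
  have hvu := hstrong v hv u hu
  rw [norm_sub_rev] at hvu ⊢
  have hηL : 0 ≤ η * L := mul_nonneg hη ((norm_nonneg G).trans hG)
  nlinarith [mul_le_mul_of_nonneg_left hGuv hη, norm_nonneg (u - v)]

lemma mirror_step_apply_sub_le (hD : ∀ x y, D x y = ψ x - ψ y - ψ' y (x - y))
    (hstrong : ∀ x ∈ X, ∀ y ∈ X, (1 / 2 : ℝ) * ‖x - y‖ ^ 2 ≤ D x y) {u v y : E} (hu : u ∈ X)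
    (hv : v ∈ X) {G : StrongDual ℝ E} {η L : ℝ} (hη : 0 ≤ η) (hG : ‖G‖ ≤ L)
    (hopt : 0 ≤ (η • G + ψ' v - ψ' u) (y - v)) :
    η * G (u - y) ≤ D y u - D y v + η ^ 2 * L ^ 2 / 2 := by
  have hbreg := mirror_step_bregman_le hD hopt
  have hGuv : G (u - v) ≤ L * ‖u - v‖ := (le_abs_self _).trans (G.le_of_opNorm_le hG _)
  have hvu := hstrong v hv u hu
  rw [norm_sub_rev] at hvu
  have hsplit : G (u - y) = G (u - v) - G (y - v) := by simp only [map_sub]; ring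
  rw [hsplit]
  nlinarith [mul_le_mul_of_nonneg_left hGuv hη, sq_nonneg (η * L - ‖u - v‖)]

lemma mirror_step_sub_le_of_subgradient (hD : ∀ x y, D x y = ψ x - ψ y - ψ' y (x - y))
    (hstrong : ∀ x ∈ X, ∀ y ∈ X, (1 / 2 : ℝ) * ‖x - y‖ ^ 2 ≤ D x y) {u v y : E} (hu : u ∈ X)
    (hv : v ∈ X) {G : StrongDual ℝ E} {η L : ℝ} (hη : 0 < η) (hG : ‖G‖ ≤ L)
    (hopt : 0 ≤ (η • G + ψ' v - ψ' u) (y - v)) {φ : E → ℝ} (hsub : φ u + G (y - u) ≤ φ y) :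
    φ u - φ y ≤ (D y u - D y v) / η + η * L ^ 2 / 2 := by
  have hstep := mirror_step_apply_sub_le hD hstrong hu hv hη.le hG hopt
  have hGyu : G (y - u) = - G (u - y) := by rw [← map_neg, neg_sub]
  have hdiv : (D y u - D y v) / η + η * L ^ 2 / 2 = (D y u - D y v + η ^ 2 * L ^ 2 / 2) / η := by
    field_simp
  rw [hdiv, le_div_iff₀ hη]
  nlinarith

lemma mirror_descent_sum_Ico_delay_sub_le (hD : ∀ x y, D x y = ψ x - ψ y - ψ' y (x - y))
    (hstrong : ∀ x ∈ X, ∀ y ∈ X, (1 / 2 : ℝ) * ‖x - y‖ ^ 2 ≤ D x y) {R : ℝ}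
    (hradius : ∀ x ∈ X, ∀ y ∈ X, D x y ≤ (1 / 2 : ℝ) * R ^ 2) (hR : 0 ≤ R) {L a : ℝ}
    (hL : 0 ≤ L) (ha : 0 < a) {u : ℕ → E} (hu : ∀ s, u s ∈ X) {G : ℕ → StrongDual ℝ E}
    (hG : ∀ s, 1 ≤ s → ‖G s‖ ≤ L) {η : ℕ → ℝ} (hη : ∀ s, 1 ≤ s → η s = a / √(s : ℝ))
    (hopt : ∀ s, 1 ≤ s → ∀ z ∈ X, 0 ≤ (η s • G s + ψ' (u (s + 1)) - ψ' (u s)) (z - u (s + 1)))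
    {ℓ : ℕ → E → ℝ} (hℓ : ∀ s, ∀ p ∈ X, ∀ q ∈ X, |ℓ s p - ℓ s q| ≤ L * ‖p - q‖)
    (hsub : ∀ s, 1 ≤ s → ∀ z ∈ X, ℓ s (u s) + G s (z - u s) ≤ ℓ s z) {y : E} (hy : y ∈ X)
    {τ : ℕ} (hτ : 1 ≤ τ) (T : ℕ) :
    ∑ t ∈ Ico 1 T, (ℓ (t + τ) (u (t + 1)) - ℓ (t + τ) y)
      ≤ 2 * (τ - 1) * a * L ^ 2 * √(T : ℝ)
        + (R ^ 2 * √(T : ℝ) / (2 * a) + a * L ^ 2 * √(T : ℝ)) + (τ - 1) * (L * R) := by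
  have hηpos : ∀ s, 1 ≤ s → 0 < η s := fun s hs => by
    rw [hη s hs]; exact div_pos ha (Real.sqrt_pos.mpr (by exact_mod_cast hs))
  have hmove : ∀ s, 1 ≤ s → ‖u (s + 1) - u s‖ ≤ a / √(s : ℝ) * L := fun s hs =>
    hη s hs ▸ mirror_step_norm_sub_le hD hstrong (hu s) (hu (s + 1)) (hηpos s hs).le (hG s hs)
      (hopt s hs _ (hu s))
  have hloss : ∀ s, 1 ≤ s → ℓ s (u s) - ℓ s y
      ≤ (D y (u s) - D y (u (s + 1))) / (a / √(s : ℝ)) + a / √(s : ℝ) * L ^ 2 / 2 :=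
    fun s hs => hη s hs ▸ mirror_step_sub_le_of_subgradient hD hstrong (hu s) (hu (s + 1))
      (hηpos s hs) (hG s hs) (hopt s hs y hy) (hsub s hs y hy)
  have hlossLR : ∀ s, ℓ s (u s) - ℓ s y ≤ L * R := fun s =>
    (le_abs_self _).trans <| (hℓ s _ (hu s) _ hy).trans <|
      mul_le_mul_of_nonneg_left (norm_sub_le_of_bregman_le_sq hR hstrong hradius (hu s) hy) hL
  have hregret := sum_Icc_le_of_le_sub_div_add ha
    (fun s => (by positivity : (0 : ℝ) ≤ 1 / 2 * ‖y - u s‖ ^ 2).trans (hstrong y hy _ (hu s)))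
    (fun s => (hradius y hy _ (hu s)).trans_eq (by ring)) hloss (by omega : 1 ≤ τ + 1) T
  calc ∑ t ∈ Ico 1 T, (ℓ (t + τ) (u (t + 1)) - ℓ (t + τ) y)
      = ∑ t ∈ Ico 1 T, (ℓ (t + τ) (u (t + 1)) - ℓ (t + τ) (u (t + τ)))
          + ∑ t ∈ Ico 1 T, (ℓ (t + τ) (u (t + τ)) - ℓ (t + τ) y) := by
        rw [← sum_add_distrib]; simp only [sub_add_sub_cancel]
    _ ≤ 2 * (τ - 1) * a * L ^ 2 * √(T : ℝ)
          + (∑ s ∈ Icc (τ + 1) T, (ℓ s (u s) - ℓ s y) + (τ - 1) * (L * R)) :=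
        add_le_add (sum_Ico_delay_sub_le ha.le hL hℓ hu hmove hτ T)
          (sum_Ico_add_le_sum_Icc_add (fun s => ℓ s (u s) - ℓ s y) (mul_nonneg hL hR) hlossLR hτ T)
    _ ≤ _ := by linarith

end MirrorStep

lemma integral_le_of_ae_le_const {Ω : Type*} {m0 : MeasurableSpace Ω} {μ : Measure Ω}
    [IsProbabilityMeasure μ] {g : Ω → ℝ} {c : ℝ} (hg : Integrable g μ)
    (hgc : ∀ᵐ ω ∂μ, g ω ≤ c) : ∫ ω, g ω ∂μ ≤ c :=
  (integral_mono_ae hg (integrable_const c) hgc).trans_eq (by simp)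

lemma integral_le_of_abs_condExp_le {Ω : Type*} {m m0 : MeasurableSpace Ω} {μ : Measure Ω}
    [IsProbabilityMeasure μ] (hm : m ≤ m0) {g : Ω → ℝ} {c : ℝ}
    (hc : ∀ᵐ ω ∂μ, |μ[g | m] ω| ≤ c) : ∫ ω, g ω ∂μ ≤ c := by
  rw [← integral_condExp hm]
  exact integral_le_of_ae_le_const integrable_condExp (hc.mono fun _ h => (le_abs_self _).trans h)

lemma integral_sub_le_add_of_abs_condExp_le {Ω : Type*} {m m0 : MeasurableSpace Ω}
    {μ : Measure Ω} [IsProbabilityMeasure μ] (hm : m ≤ m0) {g₁ g₂ h₁ h₂ : Ω → ℝ}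
    (hg₁ : Integrable g₁ μ) (hg₂ : Integrable g₂ μ) (hh₁ : Integrable h₁ μ) (hh₂ : Integrable h₂ μ)
    {c : ℝ} (hc : ∀ᵐ ω ∂μ, |μ[fun ω => g₁ ω - g₂ ω - h₁ ω + h₂ ω | m] ω| ≤ c) :
    ∫ ω, (g₁ ω - g₂ ω) ∂μ ≤ c + ∫ ω, (h₁ ω - h₂ ω) ∂μ := by
  have hsplit : ∫ ω, (g₁ ω - g₂ ω) ∂μ
      = ∫ ω, (g₁ ω - g₂ ω - h₁ ω + h₂ ω) ∂μ + ∫ ω, (h₁ ω - h₂ ω) ∂μ := by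
    rw [← integral_add (f := fun ω => g₁ ω - g₂ ω - h₁ ω + h₂ ω) (g := fun ω => h₁ ω - h₂ ω)
      (((hg₁.sub hg₂).sub hh₁).add hh₂) (hh₁.sub hh₂)]
    congr 1; ext ω; ring
  linarith [integral_le_of_abs_condExp_le hm hc]

lemma integral_sub_integral_le_mul_norm {E S : Type*} [SeminormedAddCommGroup E]
    [MeasurableSpace S] {π : Measure S} [IsProbabilityMeasure π] {X : Set E} {F : E → S → ℝ}
    {L : ℝ} (hFLip : ∀ s, ∀ u ∈ X, ∀ v ∈ X, |F u s - F v s| ≤ L * ‖u - v‖)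
    (hFint : ∀ u ∈ X, Integrable (fun s => F u s) π) {p q : E} (hp : p ∈ X) (hq : q ∈ X) :
    ∫ s, F p s ∂π - ∫ s, F q s ∂π ≤ L * ‖p - q‖ := by
  rw [← integral_sub (hFint p hp) (hFint q hq)]
  exact integral_le_of_ae_le_const ((hFint p hp).sub (hFint q hq))
    (ae_of_all _ fun s => (le_abs_self _).trans (hFLip s p hp q hq))

lemma ConvexOn.map_average_sub_le {E ι : Type*} [AddCommGroup E] [Module ℝ E] {X : Set E}
    {f : E → ℝ} (hf : ConvexOn ℝ X f) {s : Finset ι} (hs : s.Nonempty) {p : ι → E}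
    (hp : ∀ i ∈ s, p i ∈ X) (c : ℝ) :
    f ((#s : ℝ)⁻¹ • ∑ i ∈ s, p i) - c ≤ ∑ i ∈ s, (#s : ℝ)⁻¹ * (f (p i) - c) := by
  have hw : ∑ _i ∈ s, (#s : ℝ)⁻¹ = 1 := by
    rw [sum_const, nsmul_eq_mul, mul_inv_cancel₀ (by exact_mod_cast hs.card_ne_zero)]
  have hjensen := hf.map_sum_le (fun _ _ => by positivity) hw hp
  simp only [smul_eq_mul] at hjensen
  rw [smul_sum]
  simp only [mul_sub, sum_sub_distrib, ← sum_mul, hw, one_mul]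
  linarith

lemma integral_map_average_sub_le {E Ω : Type*} [AddCommGroup E] [Module ℝ E] {X : Set E}
    {f : E → ℝ} (hf : ConvexOn ℝ X f) {m0 : MeasurableSpace Ω} {μ : Measure Ω}
    [IsFiniteMeasure μ] {x : ℕ → Ω → E} (hx : ∀ t ω, x t ω ∈ X)
    (hint : ∀ t, Integrable (fun ω => f (x t ω)) μ) {T : ℕ} (hT : 1 ≤ T)
    (havg : Integrable (fun ω => f ((T : ℝ)⁻¹ • ∑ t ∈ Icc 1 T, x t ω)) μ) (c : ℝ) :
    ∫ ω, (f ((T : ℝ)⁻¹ • ∑ t ∈ Icc 1 T, x t ω) - c) ∂μ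
      ≤ (T : ℝ)⁻¹ * ∑ t ∈ Icc 1 T, ∫ ω, (f (x t ω) - c) ∂μ := by
  have hint' : ∀ t ∈ Icc 1 T, Integrable (fun ω => (T : ℝ)⁻¹ * (f (x t ω) - c)) μ :=
    fun t _ => ((hint t).sub (integrable_const c)).const_mul _
  simp only [mul_sum, ← integral_const_mul]
  rw [← integral_finsetSum _ hint']
  refine integral_mono (havg.sub (integrable_const c)) (integrable_finsetSum _ hint') fun ω => ?_
  simpa using hf.map_average_sub_le (nonempty_Icc.mpr hT) (fun t _ => hx t ω) c

lemma sum_Icc_le_of_succ_le {a b : ℕ → ℝ} {A B C : ℝ} {T : ℕ} (hT : 1 ≤ T) (h1 : a 1 ≤ A)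
    (hsucc : ∀ t, 1 ≤ t → a (t + 1) ≤ B + b t) (hb : ∑ t ∈ Ico 1 T, b t ≤ C) :
    ∑ t ∈ Icc 1 T, a t ≤ A + (T - 1) * B + C := by
  have hshift : ∑ t ∈ Icc 1 T, a t = a 1 + ∑ t ∈ Ico 1 T, a (t + 1) := by
    rw [← Ico_add_one_right_eq_Icc, sum_eq_sum_Ico_succ_bot (by omega), sum_Ico_add']
  have hsum : ∑ t ∈ Ico 1 T, a (t + 1) ≤ ∑ t ∈ Ico 1 T, (B + b t) :=
    sum_le_sum fun t ht => hsucc t (mem_Ico.mp ht).1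
  rw [sum_add_distrib, sum_const, Nat.card_Ico, nsmul_eq_mul, Nat.cast_sub hT, Nat.cast_one]
    at hsum
  linarith

lemma average_bound_le {a L R ε τ K : ℝ} {T : ℕ} (hT : 1 ≤ T) (ha : 0 < a) (hL : 0 ≤ L)
    (hR : 0 ≤ R) (hε : 0 ≤ ε) (hτK : τ ≤ K) :
    (T : ℝ)⁻¹ * (L * R + (T - 1) * (ε * L * R)
        + (2 * (τ - 1) * a * L ^ 2 * √(T : ℝ)
          + (R ^ 2 * √(T : ℝ) / (2 * a) + a * L ^ 2 * √(T : ℝ)) + (τ - 1) * (L * R)))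
      ≤ R ^ 2 / (2 * a * √(T : ℝ)) + 2 * a * L ^ 2 / √(T : ℝ) * K + ε * L * R
        + R * L * K / T := by
  have hr : 0 < √(T : ℝ) := Real.sqrt_pos.mpr (by exact_mod_cast hT)
  have hrT : √(T : ℝ) ^ 2 = T := Real.sq_sqrt (Nat.cast_nonneg T)
  set r := √(T : ℝ)
  rw [← hrT, inv_mul_le_iff₀ (by positivity)]
  have hexpand : r ^ 2 * (R ^ 2 / (2 * a * r) + 2 * a * L ^ 2 / r * K + ε * L * R
      + R * L * K / r ^ 2) = R ^ 2 * r / (2 * a) + 2 * a * L ^ 2 * K * r + r ^ 2 * (ε * L * R)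
        + R * L * K := by
    field_simp
  rw [hexpand]
  have hLR : 0 ≤ L * R := mul_nonneg hL hR
  nlinarith [mul_nonneg (mul_nonneg (mul_nonneg ha.le (sq_nonneg L)) hr.le) (sub_nonneg.mpr hτK),
    mul_nonneg (mul_nonneg ha.le (sq_nonneg L)) hr.le, mul_nonneg hε hLR,
    mul_nonneg hLR (sub_nonneg.mpr hτK)]

theorem emd_geometric_mixing_rate_general
    {E : Type*} [NormedAddCommGroup E] [NormedSpace ℝ E]
    (X : Set E) (hXconv : Convex ℝ X)
    (ψ : E → ℝ) (ψ' : E → StrongDual ℝ E)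
    (D : E → E → ℝ)
    (hD : ∀ x y : E, D x y = ψ x - ψ y - ψ' y (x - y))
    (R L : ℝ) (hR : 0 < R) (hL : 0 < L)
    (hstrong : ∀ x ∈ X, ∀ y ∈ X, (1 / 2 : ℝ) * ‖x - y‖ ^ 2 ≤ D x y)
    (hradius : ∀ x ∈ X, ∀ y ∈ X, D x y ≤ (1 / 2 : ℝ) * R ^ 2)
    -- adapted stochastic setup
    {Ω : Type*} {m0 : MeasurableSpace Ω} (μ : Measure Ω) [IsProbabilityMeasure μ]
    (ℱ : Filtration ℕ m0)
    {S : Type*} [MeasurableSpace S]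
    (ξ : ℕ → Ω → S)
    (F : E → S → ℝ)
    (hFconv : ∀ s : S, ConvexOn ℝ X (fun u => F u s))
    (hFLip : ∀ s : S, ∀ u ∈ X, ∀ v ∈ X, |F u s - F v s| ≤ L * ‖u - v‖)
    (π : Measure S) [IsProbabilityMeasure π]
    (hFint : ∀ u ∈ X, Integrable (fun s => F u s) π)
    (f : E → ℝ) (hf : ∀ u : E, f u = ∫ s, F u s ∂π)
    (xstar : E) (hxstar : xstar ∈ X)
    -- adapted EMD iterates with stepsizes η(t) = a / √t
    (x : ℕ → Ω → E) (hxX : ∀ t ω, x t ω ∈ X)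
    (hxmeas : ∀ t : ℕ, 1 ≤ t → StronglyMeasurable[ℱ (t - 1)] (x t))
    (g : ℕ → Ω → StrongDual ℝ E)
    (a : ℝ) (ha : 0 < a)
    (η : ℕ → ℝ) (hη : ∀ t : ℕ, 1 ≤ t → η t = a / Real.sqrt t)
    (hopt : ∀ᵐ ω ∂μ, ∀ t : ℕ, 1 ≤ t → ∀ y ∈ X,
      0 ≤ (η t • g t ω + ψ' (x (t + 1) ω) - ψ' (x t ω)) (y - x (t + 1) ω))
    (hsub : ∀ᵐ ω ∂μ, ∀ t : ℕ, 1 ≤ t → ∀ y ∈ X,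
      F (x t ω) (ξ t ω) + g t ω (y - x t ω) ≤ F y (ξ t ω))
    (hgbd : ∀ᵐ ω ∂μ, ∀ t : ℕ, 1 ≤ t → ‖g t ω‖ ≤ L)
    -- integrability of the relevant random variables
    (hfxint : ∀ t, Integrable (fun ω => f (x t ω)) μ)
    (hFxint : ∀ t s : ℕ, Integrable (fun ω => F (x t ω) (ξ s ω)) μ)
    (hFstarint : ∀ s : ℕ, Integrable (fun ω => F xstar (ξ s ω)) μ)
    -- geometric mixing hypothesis
    (κ₁ κ₂ : ℝ)
    (ε : ℝ) (hε0 : 0 < ε)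
    (τ : ℕ) (hτ1 : 1 ≤ τ) (hτbd : (τ : ℝ) ≤ κ₁ * Real.log (κ₂ / ε))
    (hmix : ∀ t : ℕ, 1 ≤ t → ∀ u : Ω → E,
      StronglyMeasurable[ℱ t] u → (∀ ω, u ω ∈ X) →
      Integrable (fun ω => f (u ω)) μ →
      Integrable (fun ω => F (u ω) (ξ (t + τ) ω)) μ →
      ∀ᵐ ω ∂μ,
        |(μ[(fun ω => f (u ω) - f xstar
            - F (u ω) (ξ (t + τ) ω) + F xstar (ξ (t + τ) ω)) | ℱ t]) ω|
          ≤ ε * L * R)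
    (T : ℕ) (hT : 1 ≤ T)
    (hfavgint :
      Integrable (fun ω => f ((T : ℝ)⁻¹ • ∑ t ∈ Finset.Icc 1 T, x t ω)) μ) :
    ∫ ω, (f ((T : ℝ)⁻¹ • ∑ t ∈ Finset.Icc 1 T, x t ω) - f xstar) ∂μ
      ≤ R ^ 2 / (2 * a * Real.sqrt T)
        + (2 * a * L ^ 2 / Real.sqrt T) * (κ₁ * Real.log (κ₂ / ε))
        + ε * L * R
        + R * L * κ₁ * Real.log (κ₂ / ε) / T := by
  have hf_conv : ConvexOn ℝ X f := by
    simpa only [← hf] using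
      integral_convexOn_of_integrand_ae (f := fun s u => F u s) hXconv (ae_of_all _ hFconv) hFint
  have hΔint : ∀ t ∈ Ico 1 T,
      Integrable (fun ω => F (x (t + 1) ω) (ξ (t + τ) ω) - F xstar (ξ (t + τ) ω)) μ :=
    fun t _ => (hFxint _ _).sub (hFstarint _)
  have hfirst : ∫ ω, (f (x 1 ω) - f xstar) ∂μ ≤ L * R :=
    integral_le_of_ae_le_const ((hfxint 1).sub (integrable_const _)) <| ae_of_all _ fun ω => by
      rw [hf, hf]
      exact (integral_sub_integral_le_mul_norm hFLip hFint (hxX 1 ω) hxstar).trans <|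
        mul_le_mul_of_nonneg_left
          (norm_sub_le_of_bregman_le_sq hR.le hstrong hradius (hxX 1 ω) hxstar) hL.le
  have hterm : ∀ t, 1 ≤ t → ∫ ω, (f (x (t + 1) ω) - f xstar) ∂μ
      ≤ ε * L * R + ∫ ω, (F (x (t + 1) ω) (ξ (t + τ) ω) - F xstar (ξ (t + τ) ω)) ∂μ :=
    fun t ht => integral_sub_le_add_of_abs_condExp_le (ℱ.le t) (hfxint _) (integrable_const _)
      (hFxint _ _) (hFstarint _) <| hmix t ht (x (t + 1))
        (by simpa using hxmeas (t + 1) (by omega)) (hxX (t + 1)) (hfxint _) (hFxint _ _)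
  have hsum : ∑ t ∈ Ico 1 T, ∫ ω, (F (x (t + 1) ω) (ξ (t + τ) ω) - F xstar (ξ (t + τ) ω)) ∂μ
      ≤ 2 * (τ - 1) * a * L ^ 2 * √(T : ℝ)
        + (R ^ 2 * √(T : ℝ) / (2 * a) + a * L ^ 2 * √(T : ℝ)) + (τ - 1) * (L * R) := by
    rw [← integral_finsetSum _ hΔint]
    refine integral_le_of_ae_le_const (integrable_finsetSum _ hΔint) ?_
    filter_upwards [hopt, hsub, hgbd] with ω hoptω hsubω hgbdω
    exact mirror_descent_sum_Ico_delay_sub_le hD hstrong hradius hR.le hL.le ha (hxX · ω) hgbdω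
      hη hoptω (fun s => hFLip (ξ s ω)) hsubω hxstar hτ1 T
  calc _ ≤ (T : ℝ)⁻¹ * ∑ t ∈ Icc 1 T, ∫ ω, (f (x t ω) - f xstar) ∂μ :=
        integral_map_average_sub_le hf_conv hxX hfxint hT hfavgint _
    _ ≤ _ := mul_le_mul_of_nonneg_left (sum_Icc_le_of_succ_le hT hfirst hterm hsum) (by positivity)
    _ ≤ _ := (average_bound_le hT ha hL.le hR.le hε0.le hτbd).trans_eq (by ring)

/-- Convergence rate under geometric mixing (Corollary 2 of the paper). -/
theorem emd_geometric_mixing_rate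
    {E : Type*} [NormedAddCommGroup E] [NormedSpace ℝ E]
    [MeasurableSpace E] [BorelSpace E]
    (X : Set E) (hXne : X.Nonempty) (hXconv : Convex ℝ X)
    (ψ : E → ℝ) (ψ' : E → StrongDual ℝ E)
    (D : E → E → ℝ)
    (hD : ∀ x y : E, D x y = ψ x - ψ y - ψ' y (x - y))
    (R L : ℝ) (hR : 0 < R) (hL : 0 < L)
    (hstrong : ∀ x ∈ X, ∀ y ∈ X, (1 / 2 : ℝ) * ‖x - y‖ ^ 2 ≤ D x y)
    (hradius : ∀ x ∈ X, ∀ y ∈ X, D x y ≤ (1 / 2 : ℝ) * R ^ 2)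
    -- adapted stochastic setup
    {Ω : Type*} {m0 : MeasurableSpace Ω} (μ : Measure Ω) [IsProbabilityMeasure μ]
    (ℱ : Filtration ℕ m0)
    {S : Type*} [MeasurableSpace S]
    (ξ : ℕ → Ω → S) (hξ : ∀ t, Measurable[ℱ t] (ξ t))
    (F : E → S → ℝ) (hFmeas : Measurable (Function.uncurry F))
    (hFconv : ∀ s : S, ConvexOn ℝ X (fun u => F u s))
    (hFLip : ∀ s : S, ∀ u ∈ X, ∀ v ∈ X, |F u s - F v s| ≤ L * ‖u - v‖)
    (π : Measure S) [IsProbabilityMeasure π]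
    (hFint : ∀ u ∈ X, Integrable (fun s => F u s) π)
    (f : E → ℝ) (hf : ∀ u : E, f u = ∫ s, F u s ∂π)
    (xstar : E) (hxstar : xstar ∈ X)
    -- adapted EMD iterates with stepsizes η(t) = a / √t
    (x : ℕ → Ω → E) (hxX : ∀ t ω, x t ω ∈ X)
    (hxmeas : ∀ t : ℕ, 1 ≤ t → StronglyMeasurable[ℱ (t - 1)] (x t))
    (g : ℕ → Ω → StrongDual ℝ E)
    (hgmeas : ∀ t, StronglyMeasurable[ℱ t] (g t))
    (a : ℝ) (ha : 0 < a)
    (η : ℕ → ℝ) (hη : ∀ t : ℕ, 1 ≤ t → η t = a / Real.sqrt t)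
    (hopt : ∀ᵐ ω ∂μ, ∀ t : ℕ, 1 ≤ t → ∀ y ∈ X,
      0 ≤ (η t • g t ω + ψ' (x (t + 1) ω) - ψ' (x t ω)) (y - x (t + 1) ω))
    (hsub : ∀ᵐ ω ∂μ, ∀ t : ℕ, 1 ≤ t → ∀ y ∈ X,
      F (x t ω) (ξ t ω) + g t ω (y - x t ω) ≤ F y (ξ t ω))
    (hgbd : ∀ᵐ ω ∂μ, ∀ t : ℕ, 1 ≤ t → ‖g t ω‖ ≤ L)
    -- integrability of the relevant random variables
    (hfxint : ∀ t, Integrable (fun ω => f (x t ω)) μ)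
    (hFxint : ∀ t s : ℕ, Integrable (fun ω => F (x t ω) (ξ s ω)) μ)
    (hFstarint : ∀ s : ℕ, Integrable (fun ω => F xstar (ξ s ω)) μ)
    -- geometric mixing hypothesis
    (κ₁ κ₂ : ℝ) (hκ₁ : 0 < κ₁) (hκ₂ : 0 < κ₂)
    (ε : ℝ) (hε0 : 0 < ε) (hεκ₂ : ε < κ₂)
    (hκlog : 1 ≤ κ₁ * Real.log (κ₂ / ε))
    (τ : ℕ) (hτ1 : 1 ≤ τ) (hτbd : (τ : ℝ) ≤ κ₁ * Real.log (κ₂ / ε))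
    (hmix : ∀ t : ℕ, 1 ≤ t → ∀ u : Ω → E,
      StronglyMeasurable[ℱ t] u → (∀ ω, u ω ∈ X) →
      Integrable (fun ω => f (u ω)) μ →
      Integrable (fun ω => F (u ω) (ξ (t + τ) ω)) μ →
      ∀ᵐ ω ∂μ,
        |(μ[(fun ω => f (u ω) - f xstar
            - F (u ω) (ξ (t + τ) ω) + F xstar (ξ (t + τ) ω)) | ℱ t]) ω|
          ≤ ε * L * R)
    (T : ℕ) (hT : 1 ≤ T)
    (hfavgint :
      Integrable (fun ω => f ((T : ℝ)⁻¹ • ∑ t ∈ Finset.Icc 1 T, x t ω)) μ) :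
    ∫ ω, (f ((T : ℝ)⁻¹ • ∑ t ∈ Finset.Icc 1 T, x t ω) - f xstar) ∂μ
      ≤ R ^ 2 / (2 * a * Real.sqrt T)
        + (2 * a * L ^ 2 / Real.sqrt T) * (κ₁ * Real.log (κ₂ / ε))
        + ε * L * R
        + R * L * κ₁ * Real.log (κ₂ / ε) / T :=
  emd_geometric_mixing_rate_general X hXconv ψ ψ' D hD R L hR hL hstrong hradius μ ℱ ξ F hFconv
    hFLip π hFint f hf xstar hxstar x hxX hxmeas g a ha η hη hopt hsub hgbd hfxint hFxint hFstarint
    κ₁ κ₂ ε hε0 τ hτ1 hτbd hmix T hT hfavgint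
end

section
/- Optimization of the mixing-accuracy tradeoff for polynomially mixing processes (the key inequality in the second part of Corollary 6 of the paper, with a corrected constant). Let L > 0, R > 0, M ≥ 1, β ≥ 0, and T ≥ 1 be real numbers. Then inf_{ε > 0} ( 2·ε·L·R + 3·M·ε^{−β}·L·R/√T ) ≤ 2e·L·R·(3M/2)^{1/(β+1)}·T^{−1/(2(β+1))}. -/
/-!
At `ε = (b / a) ^ (1 / (p + 1))` the two terms of `a * ε + b * ε ^ (-p)` are equal, so the
infimum is at most `2 * a * ε`. With `a = 2LR` and `b = 3MLR/√T` this is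
`4LR · (3M/2)^(1/(β+1)) · T^(-1/(2(β+1)))`, and `4 ≤ 2e`.
-/

open Real

lemma sInf_image_add_rpow_neg_le {a b p : ℝ} (ha : 0 < a) (hb : 0 < b) (hp : p + 1 ≠ 0) :
    sInf ((fun ε : ℝ => a * ε + b * ε ^ (-p)) '' Set.Ioi 0) ≤ 2 * a * (b / a) ^ (1 / (p + 1)) := by
  set ε := (b / a) ^ (1 / (p + 1)) with hε_def
  have hε : 0 < ε := by positivity
  have hpow : ε ^ (p + 1) = b / a := by rw [hε_def, one_div, rpow_inv_rpow (by positivity) hp]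
  have hbalance : b * ε ^ (-p) = a * ε :=
    calc b * ε ^ (-p) = a * (ε ^ (p + 1) * ε ^ (-p)) := by rw [hpow]; field_simp
      _ = a * ε := by rw [← rpow_add hε]; simp
  have hbdd : BddBelow ((fun ε : ℝ => a * ε + b * ε ^ (-p)) '' Set.Ioi 0) := by
    refine ⟨0, ?_⟩
    rintro _ ⟨x, hx : 0 < x, rfl⟩
    positivity
  calc sInf _ ≤ a * ε + b * ε ^ (-p) := csInf_le hbdd ⟨ε, hε, rfl⟩
    _ = 2 * a * ε := by rw [hbalance]; ring

lemma div_sqrt_rpow {x T : ℝ} (hx : 0 ≤ x) (hT : 0 ≤ T) (q : ℝ) :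
    (x / √T) ^ q = x ^ q * T ^ (-(q / 2)) := by
  rw [div_rpow hx (sqrt_nonneg T), sqrt_eq_rpow, ← rpow_mul hT, rpow_neg hT, div_eq_mul_inv]
  ring_nf

/-- Optimization of the mixing-accuracy tradeoff for polynomially mixing
processes (key inequality in the second part of Corollary 6 of the paper,
with a corrected constant). -/
theorem polynomial_mixing_tradeoff
    (L R M β T : ℝ) (hL : 0 < L) (hR : 0 < R) (hM : 1 ≤ M)
    (hβ : 0 ≤ β) (hT : 1 ≤ T) :
    sInf ((fun ε : ℝ =>
        2 * ε * L * R + 3 * M * ε ^ (-β) * L * R / Real.sqrt T) '' Set.Ioi 0)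
      ≤ 2 * Real.exp 1 * L * R * (3 * M / 2) ^ ((1 : ℝ) / (β + 1))
          * T ^ (-(1 / (2 * (β + 1)))) := by
  have hT0 : 0 < T := by linarith
  have hobjective : (fun ε : ℝ => 2 * ε * L * R + 3 * M * ε ^ (-β) * L * R / √T) =
      fun ε => 2 * (L * R) * ε + 3 * M * (L * R) / √T * ε ^ (-β) := by
    funext ε; ring
  have hratio : 3 * M * (L * R) / √T / (2 * (L * R)) = 3 * M / 2 / √T := by
    field_simp
  have hexp : (4 : ℝ) ≤ 2 * exp 1 := by linarith [add_one_le_exp (1 : ℝ)]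
  rw [hobjective]
  calc _ ≤ 2 * (2 * (L * R)) * (3 * M / 2 / √T) ^ (1 / (β + 1)) := by
        rw [← hratio]
        exact sInf_image_add_rpow_neg_le (by positivity) (by positivity) (by linarith)
    _ = 4 * (L * R * ((3 * M / 2) ^ (1 / (β + 1)) * T ^ (-(1 / (2 * (β + 1)))))) := by
        rw [div_sqrt_rpow (by positivity) hT0.le, div_div, mul_comm (β + 1)]
        ring
    _ ≤ 2 * exp 1 * (L * R * ((3 * M / 2) ^ (1 / (β + 1)) * T ^ (-(1 / (2 * (β + 1)))))) := by
        gcongr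
    _ = _ := by ring
end
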